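/- arXiv:2310.14168 — 4 statements merged into one kernel-verified Lean document; each statement's English description precedes it below -/
import Mathlib

section
/- Let f: ℝ^d → ℝ be continuously differentiable. Let z = (z₁,…,z_d) be a random vector whose components are i.i.d. from a probability distribution with zero first and third moments, second moment σ², and finite fourth moment with kurtosis κ₄. Then E[‖(zᵀ∇f(x))·z − ∇f(x)‖²] = ((d + κ₄ − 1)σ⁴ − 2σ² + 1)·‖∇f(x)‖² for every x ∈ ℝ^d. -/
open MeasureTheory ProbabilityTheory

/-- second moment of the exact-derivative RFG, Theorem 3.5 of the paper.
For `f` continuously differentiable and `z` a random vector with i.i.d. components having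
zero first and third moments, second moment `σ²` and kurtosis `κ₄`,
`E[‖(zᵀ∇f(x))·z − ∇f(x)‖²] = ((d + κ₄ − 1)σ⁴ − 2σ² + 1)‖∇f(x)‖²` for every `x`. -/
theorem stmt_0 {d : ℕ} (hd : 0 < d)
    {Ω : Type*} [MeasurableSpace Ω] (μ : Measure Ω) [IsProbabilityMeasure μ]
    (f : EuclideanSpace ℝ (Fin d) → ℝ) (hf : ContDiff ℝ 1 f)
    (z : Ω → EuclideanSpace ℝ (Fin d))
    (hmeas : ∀ i, Measurable fun ω => z ω i)
    (hindep : iIndepFun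
      (fun i ω => z ω i) μ)
    (hident : ∀ i j : Fin d, IdentDistrib (fun ω => z ω i) (fun ω => z ω j) μ μ)
    (σ κ₄ : ℝ) (hσ : 0 < σ)
    (hm1 : ∀ i, ∫ ω, z ω i ∂μ = 0)
    (hm2 : ∀ i, ∫ ω, z ω i ^ 2 ∂μ = σ ^ 2)
    (hm3 : ∀ i, ∫ ω, z ω i ^ 3 ∂μ = 0)
    (hm4int : ∀ i, Integrable (fun ω => z ω i ^ 4) μ)
    (hm4 : ∀ i, ∫ ω, z ω i ^ 4 ∂μ = κ₄ * σ ^ 4)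
    (x : EuclideanSpace ℝ (Fin d)) :
    ∫ ω, ‖(inner ℝ (z ω) (gradient f x) : ℝ) • z ω - gradient f x‖ ^ 2 ∂μ
      = (((d : ℝ) + κ₄ - 1) * σ ^ 4 - 2 * σ ^ 2 + 1) * ‖gradient f x‖ ^ 2 := by
  classical
  set g : EuclideanSpace ℝ (Fin d) := gradient f x with hgdef
  -- basic integrability of powers
  have key : ∀ (t : ℝ) (m : ℕ), m ≤ 4 → |t| ^ m ≤ 1 + t ^ 4 := by
    intro t m hm
    have h4 : |t| ^ 4 = t ^ 4 := by
      rw [← abs_pow]; exact abs_of_nonneg (by positivity)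
    interval_cases m <;>
      nlinarith [abs_nonneg t, sq_nonneg (|t| - 1), sq_nonneg (|t| ^ 2 - 1),
        sq_nonneg (|t| * (|t| - 1)), sq_nonneg (|t| ^ 2), sq_nonneg (|t| + 1)]
  have intp : ∀ (i : Fin d) (m : ℕ), m ≤ 4 → Integrable (fun ω => z ω i ^ m) μ := by
    intro i m hm
    refine ((integrable_const (1 : ℝ)).add (hm4int i)).mono
      ((hmeas i).pow_const m).aestronglyMeasurable (Filter.Eventually.of_forall fun ω => ?_)
    rw [Real.norm_eq_abs, Real.norm_eq_abs, abs_pow]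
    exact (key _ m hm).trans (le_abs_self _)
  have int1 : ∀ i, Integrable (fun ω => z ω i) μ := by
    intro i; simpa using intp i 1 (by norm_num)
  have int2 : ∀ i, Integrable (fun ω => z ω i ^ 2) μ := fun i => intp i 2 (by norm_num)
  have int3 : ∀ i, Integrable (fun ω => z ω i ^ 3) μ := fun i => intp i 3 (by norm_num)
  -- independence helpers
  have hindZ : ∀ {i j : Fin d}, i ≠ j →
      IndepFun (fun ω => z ω i) (fun ω => z ω j) μ := fun {i j} h => hindep.indepFun h
  have intpair : ∀ i j : Fin d, Integrable (fun ω => z ω i * z ω j) μ := by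
    intro i j
    by_cases h : i = j
    · subst h; simpa [sq] using int2 i
    · exact (hindZ h).integrable_mul (int1 i) (int1 j)
  have intquad : ∀ i j k : Fin d,
      Integrable (fun ω => z ω i * z ω j * z ω k ^ 2) μ := by
    intro i j k
    by_cases hik : i = k
    · subst hik
      by_cases hji : j = i
      · subst hji
        have : (fun ω => z ω j * z ω j * z ω j ^ 2) = fun ω => z ω j ^ 4 := by
          funext ω; ring
        rw [this]; exact hm4int j
      · have hind : IndepFun (fun ω => z ω i ^ 3) (fun ω => z ω j) μ :=
          (hindZ fun h => hji h.symm).comp (measurable_id.pow_const 3) measurable_id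
        have := hind.integrable_mul (int3 i) (int1 j)
        have heq : (fun ω => z ω i * z ω j * z ω i ^ 2)
            = fun ω => z ω i ^ 3 * z ω j := by funext ω; ring
        rw [heq]; exact this
    · by_cases hjk : j = k
      · subst hjk
        have hind : IndepFun (fun ω => z ω j ^ 3) (fun ω => z ω i) μ :=
          (hindZ hik).symm.comp (measurable_id.pow_const 3) measurable_id
        have := hind.integrable_mul (int3 j) (int1 i)
        have heq : (fun ω => z ω i * z ω j * z ω j ^ 2)
            = fun ω => z ω j ^ 3 * z ω i := by funext ω; ring
        rw [heq]; exact this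
      · by_cases hij : i = j
        · subst hij
          have hind : IndepFun (fun ω => z ω i ^ 2) (fun ω => z ω k ^ 2) μ :=
            (hindZ hik).comp (measurable_id.pow_const 2) (measurable_id.pow_const 2)
          have := hind.integrable_mul (int2 i) (int2 k)
          have heq : (fun ω => z ω i * z ω i * z ω k ^ 2)
              = fun ω => z ω i ^ 2 * z ω k ^ 2 := by funext ω; ring
          rw [heq]; exact this
        · have hind : IndepFun (fun ω => z ω i * z ω j) (fun ω => z ω k ^ 2) μ :=
            (hindep.indepFun_prodMk hmeas i j k hik hjk).comp
              (measurable_fst.mul measurable_snd) (measurable_id.pow_const 2)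
          exact hind.integrable_mul (intpair i j) (int2 k)
  -- second moments
  have mom2 : ∀ i j : Fin d,
      ∫ ω, z ω i * z ω j ∂μ = if i = j then σ ^ 2 else 0 := by
    intro i j
    by_cases h : i = j
    · subst h
      rw [if_pos rfl]
      have heq : (fun ω => z ω i * z ω i) = fun ω => z ω i ^ 2 := by funext ω; ring
      rw [heq]; exact hm2 i
    · rw [if_neg h]
      have := (hindZ h).integral_fun_mul_eq_mul_integral (hmeas i).aestronglyMeasurable
        (hmeas j).aestronglyMeasurable
      have hz : ∫ ω, z ω i * z ω j ∂μ = (∫ ω, z ω i ∂μ) * ∫ ω, z ω j ∂μ := this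
      rw [hz, hm1 i, zero_mul]
  -- fourth-order mixed moments
  have mom : ∀ i j k : Fin d,
      ∫ ω, z ω i * z ω j * z ω k ^ 2 ∂μ
        = if i = j then (if i = k then κ₄ * σ ^ 4 else σ ^ 4) else 0 := by
    intro i j k
    by_cases hij : i = j
    · subst hij
      rw [if_pos rfl]
      by_cases hik : i = k
      · subst hik
        rw [if_pos rfl]
        have heq : (fun ω => z ω i * z ω i * z ω i ^ 2) = fun ω => z ω i ^ 4 := by
          funext ω; ring
        rw [heq]; exact hm4 i
      · rw [if_neg hik]
        have hind : IndepFun (fun ω => z ω i ^ 2) (fun ω => z ω k ^ 2) μ :=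
          (hindZ hik).comp (measurable_id.pow_const 2) (measurable_id.pow_const 2)
        have hz : ∫ ω, z ω i ^ 2 * z ω k ^ 2 ∂μ
            = (∫ ω, z ω i ^ 2 ∂μ) * ∫ ω, z ω k ^ 2 ∂μ :=
          hind.integral_fun_mul_eq_mul_integral ((hmeas i).pow_const 2).aestronglyMeasurable
            ((hmeas k).pow_const 2).aestronglyMeasurable
        have heq : (fun ω => z ω i * z ω i * z ω k ^ 2)
            = fun ω => z ω i ^ 2 * z ω k ^ 2 := by funext ω; ring
        rw [heq, hz, hm2 i, hm2 k]; ring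
    · rw [if_neg hij]
      by_cases hik : i = k
      · subst hik
        have hind : IndepFun (fun ω => z ω i ^ 3) (fun ω => z ω j) μ :=
          (hindZ hij).comp (measurable_id.pow_const 3) measurable_id
        have hz : ∫ ω, z ω i ^ 3 * z ω j ∂μ
            = (∫ ω, z ω i ^ 3 ∂μ) * ∫ ω, z ω j ∂μ :=
          hind.integral_fun_mul_eq_mul_integral ((hmeas i).pow_const 3).aestronglyMeasurable
            (hmeas j).aestronglyMeasurable
        have heq : (fun ω => z ω i * z ω j * z ω i ^ 2)
            = fun ω => z ω i ^ 3 * z ω j := by funext ω; ring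
        rw [heq, hz, hm3 i, zero_mul]
      · by_cases hjk : j = k
        · subst hjk
          have hind : IndepFun (fun ω => z ω j ^ 3) (fun ω => z ω i) μ :=
            (hindZ hij).symm.comp (measurable_id.pow_const 3) measurable_id
          have hz : ∫ ω, z ω j ^ 3 * z ω i ∂μ
              = (∫ ω, z ω j ^ 3 ∂μ) * ∫ ω, z ω i ∂μ :=
            hind.integral_fun_mul_eq_mul_integral ((hmeas j).pow_const 3).aestronglyMeasurable
              (hmeas i).aestronglyMeasurable
          have heq : (fun ω => z ω i * z ω j * z ω j ^ 2)
              = fun ω => z ω j ^ 3 * z ω i := by funext ω; ring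
          rw [heq, hz, hm3 j, zero_mul]
        · have hind : IndepFun (fun ω => z ω i * z ω j) (fun ω => z ω k ^ 2) μ :=
            (hindep.indepFun_prodMk hmeas i j k hik hjk).comp
              (measurable_fst.mul measurable_snd) (measurable_id.pow_const 2)
          have hz : ∫ ω, (z ω i * z ω j) * z ω k ^ 2 ∂μ
              = (∫ ω, z ω i * z ω j ∂μ) * ∫ ω, z ω k ^ 2 ∂μ :=
            hind.integral_fun_mul_eq_mul_integral ((hmeas i).mul (hmeas j)).aestronglyMeasurable
              ((hmeas k).pow_const 2).aestronglyMeasurable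
          rw [hz, mom2 i j, if_neg hij, zero_mul]
  -- pointwise expansion of the norm
  have hnorm : ∀ w : EuclideanSpace ℝ (Fin d), ‖w‖ ^ 2 = ∑ i, w i ^ 2 := by
    intro w
    rw [EuclideanSpace.norm_eq, Real.sq_sqrt (by positivity)]
    simp [sq_abs]
  have hinner : ∀ w : EuclideanSpace ℝ (Fin d), (inner ℝ w g : ℝ) = ∑ i, w i * g i := by
    intro w
    simp [PiLp.inner_apply, RCLike.inner_apply, starRingEnd_apply, mul_comm]
  have hpt : ∀ ω, ‖(inner ℝ (z ω) g : ℝ) • z ω - g‖ ^ 2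
      = (∑ i, z ω i * g i) ^ 2 * (∑ k, z ω k ^ 2)
        - 2 * (∑ i, z ω i * g i) ^ 2 + ∑ i, g i ^ 2 := by
    intro ω
    have h1 : ‖(inner ℝ (z ω) g : ℝ) • z ω - g‖ ^ 2
        = ‖(inner ℝ (z ω) g : ℝ) • z ω‖ ^ 2
          - 2 * inner ℝ ((inner ℝ (z ω) g : ℝ) • z ω) g + ‖g‖ ^ 2 :=
      norm_sub_sq_real _ _
    rw [h1, norm_smul, real_inner_smul_left, mul_pow, Real.norm_eq_abs, sq_abs,
      hnorm, hnorm, hinner]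
    ring
  -- expansions of the two main integrals
  have expandB : ∀ ω, (∑ i, z ω i * g i) ^ 2
      = ∑ i, ∑ j, g i * g j * (z ω i * z ω j) := by
    intro ω
    rw [sq, Finset.sum_mul_sum]
    exact Finset.sum_congr rfl fun i _ => Finset.sum_congr rfl fun j _ => by ring
  have expandA : ∀ ω, (∑ i, z ω i * g i) ^ 2 * (∑ k, z ω k ^ 2)
      = ∑ i, ∑ j, ∑ k, g i * g j * (z ω i * z ω j * z ω k ^ 2) := by
    intro ω
    rw [sq, Finset.sum_mul_sum, Finset.sum_mul]
    refine Finset.sum_congr rfl fun i _ => ?_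
    rw [Finset.sum_mul]
    refine Finset.sum_congr rfl fun j _ => ?_
    rw [Finset.mul_sum]
    exact Finset.sum_congr rfl fun k _ => by ring
  have intmonoB : ∀ i j : Fin d,
      Integrable (fun ω => g i * g j * (z ω i * z ω j)) μ :=
    fun i j => (intpair i j).const_mul _
  have intmonoA : ∀ i j k : Fin d,
      Integrable (fun ω => g i * g j * (z ω i * z ω j * z ω k ^ 2)) μ :=
    fun i j k => (intquad i j k).const_mul _
  set S : ℝ := ∑ i, g i ^ 2 with hS
  -- value of integral B
  have intBval : ∫ ω, (∑ i, z ω i * g i) ^ 2 ∂μ = σ ^ 2 * S := by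
    calc ∫ ω, (∑ i, z ω i * g i) ^ 2 ∂μ
        = ∫ ω, ∑ i, ∑ j, g i * g j * (z ω i * z ω j) ∂μ := by
          exact integral_congr_ae (Filter.Eventually.of_forall fun ω => expandB ω)
      _ = ∑ i, ∑ j, ∫ ω, g i * g j * (z ω i * z ω j) ∂μ := by
          rw [integral_finset_sum _ fun i _ =>
            integrable_finset_sum _ fun j _ => intmonoB i j]
          exact Finset.sum_congr rfl fun i _ =>
            integral_finset_sum _ fun j _ => intmonoB i j
      _ = ∑ i, ∑ j, g i * g j * (if i = j then σ ^ 2 else 0) := by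
          refine Finset.sum_congr rfl fun i _ => Finset.sum_congr rfl fun j _ => ?_
          rw [integral_const_mul, mom2 i j]
      _ = σ ^ 2 * S := by
          rw [hS, Finset.mul_sum]
          refine Finset.sum_congr rfl fun i _ => ?_
          rw [Finset.sum_eq_single i]
          · simp [sq]; ring
          · intro b _ hb; simp [Ne.symm hb]
          · simp
  -- value of integral A
  have intAval : ∫ ω, (∑ i, z ω i * g i) ^ 2 * (∑ k, z ω k ^ 2) ∂μ
      = ((d : ℝ) + κ₄ - 1) * σ ^ 4 * S := by
    calc ∫ ω, (∑ i, z ω i * g i) ^ 2 * (∑ k, z ω k ^ 2) ∂μ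
        = ∫ ω, ∑ i, ∑ j, ∑ k, g i * g j * (z ω i * z ω j * z ω k ^ 2) ∂μ :=
          integral_congr_ae (Filter.Eventually.of_forall fun ω => expandA ω)
      _ = ∑ i, ∑ j, ∑ k, ∫ ω, g i * g j * (z ω i * z ω j * z ω k ^ 2) ∂μ := by
          rw [integral_finset_sum _ fun i _ => integrable_finset_sum _ fun j _ =>
            integrable_finset_sum _ fun k _ => intmonoA i j k]
          refine Finset.sum_congr rfl fun i _ => ?_
          rw [integral_finset_sum _ fun j _ =>
            integrable_finset_sum _ fun k _ => intmonoA i j k]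
          exact Finset.sum_congr rfl fun j _ =>
            integral_finset_sum _ fun k _ => intmonoA i j k
      _ = ∑ i, ∑ j, ∑ k, g i * g j
            * (if i = j then (if i = k then κ₄ * σ ^ 4 else σ ^ 4) else 0) := by
          refine Finset.sum_congr rfl fun i _ => Finset.sum_congr rfl fun j _ =>
            Finset.sum_congr rfl fun k _ => ?_
          rw [integral_const_mul, mom i j k]
      _ = ∑ i, ∑ j, g i * g j
            * (if i = j then ((d : ℝ) + κ₄ - 1) * σ ^ 4 else 0) := by
          refine Finset.sum_congr rfl fun i _ => Finset.sum_congr rfl fun j _ => ?_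
          rw [← Finset.mul_sum]
          congr 1
          by_cases hij : i = j
          · simp only [hij, eq_self_iff_true, if_true]
            have : ∀ k : Fin d, (if j = k then κ₄ * σ ^ 4 else σ ^ 4)
                = σ ^ 4 + (if j = k then (κ₄ - 1) * σ ^ 4 else 0) := by
              intro k; by_cases h : j = k <;> simp [h] <;> ring
            simp only [this, Finset.sum_add_distrib, Finset.sum_const, Finset.card_univ,
              Fintype.card_fin, nsmul_eq_mul, Finset.sum_ite_eq, Finset.mem_univ, if_true]
            ring
          · simp [hij]
      _ = ((d : ℝ) + κ₄ - 1) * σ ^ 4 * S := by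
          rw [hS, Finset.mul_sum]
          refine Finset.sum_congr rfl fun i _ => ?_
          rw [Finset.sum_eq_single i]
          · simp [sq]; ring
          · intro b _ hb; simp [Ne.symm hb]
          · simp
  -- integrability of the two pieces
  have intB : Integrable (fun ω => (∑ i, z ω i * g i) ^ 2) μ := by
    have : Integrable (fun ω => ∑ i, ∑ j, g i * g j * (z ω i * z ω j)) μ :=
      integrable_finset_sum _ fun i _ => integrable_finset_sum _ fun j _ => intmonoB i j
    exact this.congr (Filter.Eventually.of_forall fun ω => (expandB ω).symm)
  have intA : Integrable (fun ω => (∑ i, z ω i * g i) ^ 2 * (∑ k, z ω k ^ 2)) μ := by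
    have : Integrable
        (fun ω => ∑ i, ∑ j, ∑ k, g i * g j * (z ω i * z ω j * z ω k ^ 2)) μ :=
      integrable_finset_sum _ fun i _ => integrable_finset_sum _ fun j _ =>
        integrable_finset_sum _ fun k _ => intmonoA i j k
    exact this.congr (Filter.Eventually.of_forall fun ω => (expandA ω).symm)
  -- put everything together
  have hfinal : ∫ ω, ‖(inner ℝ (z ω) g : ℝ) • z ω - g‖ ^ 2 ∂μ
      = ((d : ℝ) + κ₄ - 1) * σ ^ 4 * S - 2 * (σ ^ 2 * S) + S := by
    have h2B : Integrable (fun ω => 2 * (∑ i, z ω i * g i) ^ 2) μ := intB.const_mul 2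
    have hsub : Integrable (fun ω =>
        (∑ i, z ω i * g i) ^ 2 * (∑ k, z ω k ^ 2) - 2 * (∑ i, z ω i * g i) ^ 2) μ :=
      intA.sub h2B
    rw [integral_congr_ae (Filter.Eventually.of_forall fun ω => hpt ω)]
    rw [integral_add hsub (integrable_const S), integral_sub intA h2B,
      integral_const_mul, intAval, intBval]
    simp [measure_univ]
  rw [hfinal, hS, ← hnorm g]
  ring
end

section
/- Let f: ℝ^d → ℝ be continuously differentiable, convex, and L-strongly smooth, i.e., ∇f(x)ᵀ(y−x) ≤ f(y) − f(x) ≤ ∇f(x)ᵀ(y−x) + (L/2)‖y−x‖² for all x, y ∈ ℝ^d. Let z = (z₁,…,z_d) be a random vector whose components are i.i.d. from a probability distribution with zero first and third moments and second moment σ², and with finite moments up to order six; write κ_k for the k-th standardized moment. Then for any h ≥ 0 and any x ∈ ℝ^d, E[‖∇_{z,h}^FM f(x) − ∇f(x)‖²] ≤ (h²L²/2)·σ⁶·(κ₆ + (d − 2 + 3κ₄)(d − 1))·d + hL‖∇f(x)‖·E[‖z‖⁵ + ‖z‖³] + ((d + κ₄ − 1)σ⁴ − 2σ² + 1)·‖∇f(x)‖².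 -/
open MeasureTheory ProbabilityTheory


private lemma rfg_pow6_abs (x : ℝ) : |x| ^ 6 = x ^ 6 := by
  rw [← abs_pow, abs_of_nonneg (by positivity)]

private lemma rfg_dominator_bound (x y w : ℝ) {a b c : ℕ} (h : a + b + c ≤ 6) :
    |x ^ a * y ^ b * w ^ c| ≤ 2 + x ^ 6 + y ^ 6 + w ^ 6 := by
  set M : ℝ := max |x| (max |y| (max |w| 1)) with hM
  have hM1 : (1:ℝ) ≤ M := le_max_of_le_right (le_max_of_le_right (le_max_right _ _))
  have hM0 : (0:ℝ) ≤ M := by linarith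
  have hx : |x| ≤ M := le_max_left _ _
  have hy : |y| ≤ M := le_max_of_le_right (le_max_left _ _)
  have hw : |w| ≤ M := le_max_of_le_right (le_max_of_le_right (le_max_left _ _))
  have h1 : |x ^ a * y ^ b * w ^ c| = |x| ^ a * |y| ^ b * |w| ^ c := by
    rw [abs_mul, abs_mul, abs_pow, abs_pow, abs_pow]
  have h2 : |x| ^ a * |y| ^ b * |w| ^ c ≤ M ^ a * M ^ b * M ^ c := by
    gcongr
  have h3 : M ^ a * M ^ b * M ^ c = M ^ (a + b + c) := by ring
  have h4 : M ^ (a + b + c) ≤ M ^ 6 := pow_le_pow_right₀ hM1 h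
  have h5 : M ^ 6 ≤ 1 + x ^ 6 + y ^ 6 + w ^ 6 := by
    have e1 : (0:ℝ) ≤ x ^ 6 := by positivity
    have e2 : (0:ℝ) ≤ y ^ 6 := by positivity
    have e3 : (0:ℝ) ≤ w ^ 6 := by positivity
    rcases max_choice |x| (max |y| (max |w| 1)) with h' | h' <;>
      rw [hM, h']
    · rw [rfg_pow6_abs]; linarith
    rcases max_choice |y| (max |w| 1) with h'' | h'' <;> rw [h'']
    · rw [rfg_pow6_abs]; linarith
    rcases max_choice |w| (1:ℝ) with h3 | h3 <;> rw [h3]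
    · rw [rfg_pow6_abs]; linarith
    · norm_num; linarith
  linarith
section
variable {d : ℕ} {Ω : Type*} [MeasurableSpace Ω] {μ : Measure Ω} [IsProbabilityMeasure μ]
  {z : Ω → EuclideanSpace ℝ (Fin d)}

private lemma rfg_integrable_term (hmeas : ∀ i, Measurable fun ω => z ω i)
    (hm6int : ∀ i, Integrable (fun ω => z ω i ^ 6) μ)
    (i j k : Fin d) {a b c : ℕ} (h : a + b + c ≤ 6) :
    Integrable (fun ω => z ω i ^ a * z ω j ^ b * z ω k ^ c) μ := by
  have hdom : Integrable (fun ω => 2 + z ω i ^ 6 + z ω j ^ 6 + z ω k ^ 6) μ :=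
    (((integrable_const 2).add (hm6int i)).add (hm6int j)).add (hm6int k)
  refine hdom.mono ?_ (ae_of_all _ fun ω => ?_)
  · exact ((((hmeas i).pow_const a).mul ((hmeas j).pow_const b)).mul
      ((hmeas k).pow_const c)).aestronglyMeasurable
  · rw [Real.norm_eq_abs, Real.norm_eq_abs]
    exact (rfg_dominator_bound _ _ _ h).trans (le_abs_self _)
end
section
variable {d : ℕ} {Ω : Type*} [MeasurableSpace Ω] {μ : Measure Ω} [IsProbabilityMeasure μ]
  {z : Ω → EuclideanSpace ℝ (Fin d)}

private lemma rfg_integral_pair (hmeas : ∀ i, Measurable fun ω => z ω i)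
    (hindep : iIndepFun (m := fun _ : Fin d => (inferInstance : MeasurableSpace ℝ))
      (fun i ω => z ω i) μ)
    (hm6int : ∀ i, Integrable (fun ω => z ω i ^ 6) μ)
    {i j : Fin d} (hij : i ≠ j) {a b : ℕ} (hab : a + b ≤ 6) :
    ∫ ω, z ω i ^ a * z ω j ^ b ∂μ = (∫ ω, z ω i ^ a ∂μ) * ∫ ω, z ω j ^ b ∂μ := by
  have hInd : IndepFun (fun ω => z ω i ^ a) (fun ω => z ω j ^ b) μ :=
    (hindep.indepFun hij).comp (measurable_id.pow_const a) (measurable_id.pow_const b)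
  have hIa : Integrable (fun ω => z ω i ^ a) μ := by
    have := rfg_integrable_term (z := z) hmeas hm6int i i i (a := a) (b := 0) (c := 0) (by omega)
    simpa using this
  have hIb : Integrable (fun ω => z ω j ^ b) μ := by
    have := rfg_integrable_term (z := z) hmeas hm6int j j j (a := b) (b := 0) (c := 0) (by omega)
    simpa using this
  exact hInd.integral_mul_eq_mul_integral hIa.aestronglyMeasurable hIb.aestronglyMeasurable

private lemma rfg_integral_triple (hmeas : ∀ i, Measurable fun ω => z ω i)
    (hindep : iIndepFun (m := fun _ : Fin d => (inferInstance : MeasurableSpace ℝ))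
      (fun i ω => z ω i) μ)
    (hm6int : ∀ i, Integrable (fun ω => z ω i ^ 6) μ)
    {i j k : Fin d} (hik : i ≠ k) (hjk : j ≠ k) (hij : i ≠ j) {a b c : ℕ}
    (habc : a + b + c ≤ 6) :
    ∫ ω, z ω i ^ a * z ω j ^ b * z ω k ^ c ∂μ
      = (∫ ω, z ω i ^ a ∂μ) * (∫ ω, z ω j ^ b ∂μ) * ∫ ω, z ω k ^ c ∂μ := by
  have hpair : IndepFun (fun ω => (z ω i, z ω j)) (fun ω => z ω k) μ :=
    hindep.indepFun_prodMk hmeas i j k hik hjk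
  have hInd : IndepFun (fun ω => z ω i ^ a * z ω j ^ b) (fun ω => z ω k ^ c) μ :=
    hpair.comp ((measurable_fst.pow_const a).mul (measurable_snd.pow_const b))
      (measurable_id.pow_const c)
  have hIab : Integrable (fun ω => z ω i ^ a * z ω j ^ b) μ := by
    have := rfg_integrable_term (z := z) hmeas hm6int i j j (a := a) (b := b) (c := 0) (by omega)
    simpa using this
  have hIc : Integrable (fun ω => z ω k ^ c) μ := by
    have := rfg_integrable_term (z := z) hmeas hm6int k k k (a := c) (b := 0) (c := 0) (by omega)
    simpa using this
  have hmul := hInd.integral_mul_eq_mul_integral hIab.aestronglyMeasurable hIc.aestronglyMeasurable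
  rw [show ((fun ω => z ω i ^ a * z ω j ^ b) * fun ω => z ω k ^ c)
      = fun ω => z ω i ^ a * z ω j ^ b * z ω k ^ c from rfl] at hmul
  rw [hmul, rfg_integral_pair hmeas hindep hm6int hij (by omega)]
end
section
variable {d : ℕ} {Ω : Type*} [MeasurableSpace Ω] {μ : Measure Ω} [IsProbabilityMeasure μ]
  {z : Ω → EuclideanSpace ℝ (Fin d)} {σ κ₄ κ₆ : ℝ}

private lemma rfg_cast2 (hd : 0 < d) :
    ((d - 1 : ℕ) : ℝ) * ((d - 1 - 1 : ℕ) : ℝ) = ((d : ℝ) - 1) * ((d : ℝ) - 2) := by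
  rcases d with _ | _ | n
  · omega
  · norm_num
  · push_cast [Nat.succ_sub_one]; ring

private lemma rfg_cast1 (hd : 0 < d) : ((d - 1 : ℕ) : ℝ) = (d : ℝ) - 1 := by
  rw [Nat.cast_sub hd]; norm_num

private lemma rfg_norm6 (hd : 0 < d) (hmeas : ∀ i, Measurable fun ω => z ω i)
    (hindep : iIndepFun (m := fun _ : Fin d => (inferInstance : MeasurableSpace ℝ))
      (fun i ω => z ω i) μ)
    (hm2 : ∀ i, ∫ ω, z ω i ^ 2 ∂μ = σ ^ 2)
    (hm4 : ∀ i, ∫ ω, z ω i ^ 4 ∂μ = κ₄ * σ ^ 4)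
    (hm6int : ∀ i, Integrable (fun ω => z ω i ^ 6) μ)
    (hm6 : ∀ i, ∫ ω, z ω i ^ 6 ∂μ = κ₆ * σ ^ 6) :
    ∫ ω, ‖z ω‖ ^ 6 ∂μ
      = σ ^ 6 * (κ₆ + ((d : ℝ) - 2 + 3 * κ₄) * ((d : ℝ) - 1)) * d := by
  classical
  have hint3 : ∀ i j k : Fin d, Integrable (fun ω => z ω i ^ 2 * z ω j ^ 2 * z ω k ^ 2) μ :=
    fun i j k => rfg_integrable_term hmeas hm6int i j k (by omega)
  have hfun : (fun ω => ‖z ω‖ ^ 6)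
      = fun ω => ∑ i, ∑ j, ∑ k, z ω i ^ 2 * z ω j ^ 2 * z ω k ^ 2 := by
    funext ω
    have h2 : ‖z ω‖ ^ 2 = ∑ i, z ω i ^ 2 := by
      rw [EuclideanSpace.norm_eq, Real.sq_sqrt (by positivity)]
      simp [Real.norm_eq_abs, sq_abs]
    rw [show ‖z ω‖ ^ 6 = (‖z ω‖ ^ 2) ^ 3 by ring, h2,
      show (∑ i, z ω i ^ 2) ^ 3
        = ((∑ i, z ω i ^ 2) * (∑ j, z ω j ^ 2)) * (∑ k, z ω k ^ 2) by ring,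
      Finset.sum_mul_sum, Finset.sum_mul]
    exact Finset.sum_congr rfl fun i _ => by rw [Finset.sum_mul_sum]
  rw [hfun, integral_finset_sum _ fun i _ => (integrable_finset_sum _ fun j _ =>
    integrable_finset_sum _ fun k _ => hint3 i j k)]
  have step1 : ∀ i : Fin d, ∫ ω, (∑ j, ∑ k, z ω i ^ 2 * z ω j ^ 2 * z ω k ^ 2) ∂μ
      = ∑ j, ∑ k, ∫ ω, z ω i ^ 2 * z ω j ^ 2 * z ω k ^ 2 ∂μ := by
    intro i
    rw [integral_finset_sum _ fun j _ => integrable_finset_sum _ fun k _ => hint3 i j k]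
    exact Finset.sum_congr rfl fun j _ => integral_finset_sum _ fun k _ => hint3 i j k
  -- values of the individual integrals
  have Tiii : ∀ i : Fin d, ∫ ω, z ω i ^ 2 * z ω i ^ 2 * z ω i ^ 2 ∂μ = κ₆ * σ ^ 6 := by
    intro i
    rw [show (fun ω => z ω i ^ 2 * z ω i ^ 2 * z ω i ^ 2) = fun ω => z ω i ^ 6 by
      funext ω; ring]
    exact hm6 i
  have Tpair : ∀ i k : Fin d, i ≠ k →
      ∫ ω, z ω i ^ 4 * z ω k ^ 2 ∂μ = κ₄ * σ ^ 4 * σ ^ 2 := by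
    intro i k hik
    rw [rfg_integral_pair hmeas hindep hm6int hik (by omega), hm4 i, hm2 k]
  have Tiik : ∀ i k : Fin d, i ≠ k →
      ∫ ω, z ω i ^ 2 * z ω i ^ 2 * z ω k ^ 2 ∂μ = κ₄ * σ ^ 4 * σ ^ 2 := by
    intro i k hik
    rw [show (fun ω => z ω i ^ 2 * z ω i ^ 2 * z ω k ^ 2)
      = fun ω => z ω i ^ 4 * z ω k ^ 2 by funext ω; ring]
    exact Tpair i k hik
  have Tiji : ∀ i j : Fin d, i ≠ j →
      ∫ ω, z ω i ^ 2 * z ω j ^ 2 * z ω i ^ 2 ∂μ = κ₄ * σ ^ 4 * σ ^ 2 := by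
    intro i j hij
    rw [show (fun ω => z ω i ^ 2 * z ω j ^ 2 * z ω i ^ 2)
      = fun ω => z ω i ^ 4 * z ω j ^ 2 by funext ω; ring]
    exact Tpair i j hij
  have Tijj : ∀ i j : Fin d, i ≠ j →
      ∫ ω, z ω i ^ 2 * z ω j ^ 2 * z ω j ^ 2 ∂μ = κ₄ * σ ^ 4 * σ ^ 2 := by
    intro i j hij
    rw [show (fun ω => z ω i ^ 2 * z ω j ^ 2 * z ω j ^ 2)
      = fun ω => z ω j ^ 4 * z ω i ^ 2 by funext ω; ring]
    rw [rfg_integral_pair hmeas hindep hm6int (Ne.symm hij) (by omega), hm4 j, hm2 i]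
  have Tijk : ∀ i j k : Fin d, i ≠ j → i ≠ k → j ≠ k →
      ∫ ω, z ω i ^ 2 * z ω j ^ 2 * z ω k ^ 2 ∂μ = σ ^ 2 * σ ^ 2 * σ ^ 2 := by
    intro i j k hij hik hjk
    rw [rfg_integral_triple hmeas hindep hm6int hik hjk hij (by omega), hm2 i, hm2 j, hm2 k]
  -- count
  have cardE : ∀ i : Fin d, (Finset.univ.erase i).card = d - 1 := by
    intro i
    rw [Finset.card_erase_of_mem (Finset.mem_univ i), Finset.card_univ, Fintype.card_fin]
  have cardE2 : ∀ i j : Fin d, j ≠ i → ((Finset.univ.erase i).erase j).card = d - 1 - 1 := by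
    intro i j hji
    rw [Finset.card_erase_of_mem (Finset.mem_erase.mpr ⟨hji, Finset.mem_univ j⟩), cardE i]
  have inner_sum : ∀ i : Fin d, (∑ j, ∑ k, ∫ ω, z ω i ^ 2 * z ω j ^ 2 * z ω k ^ 2 ∂μ)
      = κ₆ * σ ^ 6 + ((d - 1 : ℕ) : ℝ) * (κ₄ * σ ^ 4 * σ ^ 2)
        + ((d - 1 : ℕ) : ℝ) * ((κ₄ * σ ^ 4 * σ ^ 2) + (κ₄ * σ ^ 4 * σ ^ 2)
          + ((d - 1 - 1 : ℕ) : ℝ) * (σ ^ 2 * σ ^ 2 * σ ^ 2)) := by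
    intro i
    rw [← Finset.add_sum_erase _ _ (Finset.mem_univ i)]
    congr 1
    · -- j = i
      rw [← Finset.add_sum_erase _ _ (Finset.mem_univ i), Tiii i,
        Finset.sum_congr rfl fun k hk => Tiik i k (Ne.symm (Finset.mem_erase.mp hk).1),
        Finset.sum_const, cardE i, nsmul_eq_mul]
    · -- j ≠ i
      have hjsum : ∀ j ∈ Finset.univ.erase i,
          (∑ k, ∫ ω, z ω i ^ 2 * z ω j ^ 2 * z ω k ^ 2 ∂μ)
            = (κ₄ * σ ^ 4 * σ ^ 2) + (κ₄ * σ ^ 4 * σ ^ 2)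
              + ((d - 1 - 1 : ℕ) : ℝ) * (σ ^ 2 * σ ^ 2 * σ ^ 2) := by
        intro j hj
        have hji : j ≠ i := (Finset.mem_erase.mp hj).1
        rw [← Finset.add_sum_erase Finset.univ
            (fun k => ∫ ω, z ω i ^ 2 * z ω j ^ 2 * z ω k ^ 2 ∂μ) (Finset.mem_univ i),
          ← Finset.add_sum_erase _
            (fun k => ∫ ω, z ω i ^ 2 * z ω j ^ 2 * z ω k ^ 2 ∂μ)
            (Finset.mem_erase.mpr ⟨hji, Finset.mem_univ j⟩),
          Tiji i j (Ne.symm hji), Tijj i j (Ne.symm hji),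
          Finset.sum_congr rfl (fun k hk => by
            have hk' := Finset.mem_erase.mp hk
            have hki : k ≠ i := (Finset.mem_erase.mp hk'.2).1
            have hkj : k ≠ j := hk'.1
            exact Tijk i j k (Ne.symm hji) (Ne.symm hki) (Ne.symm hkj)),
          Finset.sum_const, cardE2 i j hji, nsmul_eq_mul]
        ring
      rw [Finset.sum_congr rfl hjsum, Finset.sum_const, cardE i, nsmul_eq_mul]
  rw [Finset.sum_congr rfl fun i _ => (step1 i).trans (inner_sum i), Finset.sum_const,
    Finset.card_univ, Fintype.card_fin, nsmul_eq_mul]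
  have h2 := rfg_cast2 hd
  rw [rfg_cast1 hd] at h2 ⊢
  linear_combination (d : ℝ) * σ ^ 6 * h2
end
section
variable {d : ℕ} {Ω : Type*} [MeasurableSpace Ω] {μ : Measure Ω} [IsProbabilityMeasure μ]
  {z : Ω → EuclideanSpace ℝ (Fin d)} {σ κ₄ : ℝ}

private lemma rfg_normsq (v : EuclideanSpace ℝ (Fin d)) : ‖v‖ ^ 2 = ∑ i, v i ^ 2 := by
  rw [EuclideanSpace.norm_eq, Real.sq_sqrt (by positivity)]
  simp [Real.norm_eq_abs, sq_abs]

private lemma rfg_inner_expand (v g : EuclideanSpace ℝ (Fin d)) :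
    (inner ℝ v g : ℝ) = ∑ i, v i * g i := by
  simp [PiLp.inner_apply, RCLike.inner_apply, mul_comm]

private lemma rfg_inner_sq_expand (v g : EuclideanSpace ℝ (Fin d)) :
    (inner ℝ v g : ℝ) ^ 2 = ∑ i, ∑ j, g i * g j * (v i * v j) := by
  rw [rfg_inner_expand, sq, Finset.sum_mul_sum]
  exact Finset.sum_congr rfl fun i _ => Finset.sum_congr rfl fun j _ => by ring

private lemma rfg_inner_sq_norm_expand (v g : EuclideanSpace ℝ (Fin d)) :
    (inner ℝ v g : ℝ) ^ 2 * ‖v‖ ^ 2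
      = ∑ i, ∑ j, ∑ k, g i * g j * (v i * v j * v k ^ 2) := by
  rw [rfg_inner_sq_expand, rfg_normsq, Finset.sum_mul]
  refine Finset.sum_congr rfl fun i _ => ?_
  rw [Finset.sum_mul]
  refine Finset.sum_congr rfl fun j _ => ?_
  rw [Finset.mul_sum]
  exact Finset.sum_congr rfl fun k _ => by ring

variable (hmeas : ∀ i, Measurable fun ω => z ω i)
  (hindep : iIndepFun (m := fun _ : Fin d => (inferInstance : MeasurableSpace ℝ))
      (fun i ω => z ω i) μ)
  (hm6int : ∀ i, Integrable (fun ω => z ω i ^ 6) μ)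

include hmeas hm6int in
private lemma rfg_int_zz (i j : Fin d) : Integrable (fun ω => z ω i * z ω j) μ := by
  have := rfg_integrable_term hmeas hm6int i j j (a := 1) (b := 1) (c := 0) (by omega)
  simpa using this

include hmeas hm6int in
private lemma rfg_int_zzk (i j k : Fin d) :
    Integrable (fun ω => z ω i * z ω j * z ω k ^ 2) μ := by
  have := rfg_integrable_term hmeas hm6int i j k (a := 1) (b := 1) (c := 2) (by omega)
  simpa using this

include hmeas hindep hm6int in
private lemma rfg_Ezz (hm1 : ∀ i, ∫ ω, z ω i ∂μ = 0)
    (hm2 : ∀ i, ∫ ω, z ω i ^ 2 ∂μ = σ ^ 2) (i j : Fin d) :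
    ∫ ω, z ω i * z ω j ∂μ = if i = j then σ ^ 2 else 0 := by
  rcases eq_or_ne i j with rfl | hij
  · simp only [if_pos rfl]
    rw [show (fun ω => z ω i * z ω i) = fun ω => z ω i ^ 2 by funext ω; ring]
    exact hm2 i
  · rw [if_neg hij]
    have := rfg_integral_pair hmeas hindep hm6int hij (a := 1) (b := 1) (by omega)
    simp only [pow_one] at this
    rw [this, hm1 i, hm1 j, mul_zero]

include hmeas hindep hm6int in
private lemma rfg_inner_sq_integral (hm1 : ∀ i, ∫ ω, z ω i ∂μ = 0)
    (hm2 : ∀ i, ∫ ω, z ω i ^ 2 ∂μ = σ ^ 2) (g : EuclideanSpace ℝ (Fin d)) :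
    ∫ ω, (inner ℝ (z ω) g : ℝ) ^ 2 ∂μ = σ ^ 2 * ‖g‖ ^ 2 := by
  classical
  simp only [rfg_inner_sq_expand]
  rw [integral_finset_sum _ fun i _ => integrable_finset_sum _ fun j _ =>
    (rfg_int_zz hmeas hm6int i j).const_mul _]
  rw [Finset.sum_congr rfl fun i (_ : i ∈ Finset.univ) =>
    integral_finset_sum _ fun j _ => (rfg_int_zz hmeas hm6int i j).const_mul _]
  have hterm : ∀ i j : Fin d, ∫ ω, g i * g j * (z ω i * z ω j) ∂μ
      = g i * g j * if i = j then σ ^ 2 else 0 := fun i j => by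
    rw [integral_const_mul, rfg_Ezz hmeas hindep hm6int hm1 hm2 i j]
  rw [Finset.sum_congr rfl fun i _ => Finset.sum_congr rfl fun j _ => hterm i j]
  rw [rfg_normsq, Finset.mul_sum]
  refine Finset.sum_congr rfl fun i _ => ?_
  rw [Finset.sum_eq_single i (fun j _ hji => by rw [if_neg (Ne.symm hji), mul_zero])
    (fun hi => absurd (Finset.mem_univ i) hi)]
  rw [if_pos rfl]; ring
end
section
variable {d : ℕ} {Ω : Type*} [MeasurableSpace Ω] {μ : Measure Ω} [IsProbabilityMeasure μ]
  {z : Ω → EuclideanSpace ℝ (Fin d)} {σ κ₄ : ℝ}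

variable (hmeas : ∀ i, Measurable fun ω => z ω i)
  (hindep : iIndepFun (m := fun _ : Fin d => (inferInstance : MeasurableSpace ℝ))
      (fun i ω => z ω i) μ)
  (hm6int : ∀ i, Integrable (fun ω => z ω i ^ 6) μ)

include hmeas hindep hm6int in
private lemma rfg_S (hm1 : ∀ i, ∫ ω, z ω i ∂μ = 0)
    (hm2 : ∀ i, ∫ ω, z ω i ^ 2 ∂μ = σ ^ 2)
    (hm3 : ∀ i, ∫ ω, z ω i ^ 3 ∂μ = 0)
    (hm4 : ∀ i, ∫ ω, z ω i ^ 4 ∂μ = κ₄ * σ ^ 4) (i j k : Fin d) (hij : i ≠ j) :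
    ∫ ω, z ω i * z ω j * z ω k ^ 2 ∂μ = 0 := by
  rcases eq_or_ne k i with rfl | hki
  · rw [show (fun ω => z ω k * z ω j * z ω k ^ 2) = fun ω => z ω k ^ 3 * z ω j ^ 1 by
      funext ω; ring]
    rw [rfg_integral_pair hmeas hindep hm6int hij (by omega), hm3 k]
    simp
  rcases eq_or_ne k j with rfl | hkj
  · rw [show (fun ω => z ω i * z ω k * z ω k ^ 2) = fun ω => z ω i ^ 1 * z ω k ^ 3 by
      funext ω; ring]
    rw [rfg_integral_pair hmeas hindep hm6int hij (by omega), hm3 k]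
    simp
  · have := rfg_integral_triple hmeas hindep hm6int (Ne.symm hki) (Ne.symm hkj) hij
      (a := 1) (b := 1) (c := 2) (by omega)
    simp only [pow_one] at this
    rw [this, hm1 i]
    simp

include hmeas hindep hm6int in
private lemma rfg_inner_sq_norm_integral (hd : 0 < d)
    (hm1 : ∀ i, ∫ ω, z ω i ∂μ = 0)
    (hm2 : ∀ i, ∫ ω, z ω i ^ 2 ∂μ = σ ^ 2)
    (hm3 : ∀ i, ∫ ω, z ω i ^ 3 ∂μ = 0)
    (hm4 : ∀ i, ∫ ω, z ω i ^ 4 ∂μ = κ₄ * σ ^ 4) (g : EuclideanSpace ℝ (Fin d)) :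
    ∫ ω, (inner ℝ (z ω) g : ℝ) ^ 2 * ‖z ω‖ ^ 2 ∂μ
      = (κ₄ * σ ^ 4 + ((d : ℝ) - 1) * (σ ^ 2 * σ ^ 2)) * ‖g‖ ^ 2 := by
  classical
  simp only [rfg_inner_sq_norm_expand]
  have hint : ∀ i j k : Fin d, Integrable (fun ω => g i * g j * (z ω i * z ω j * z ω k ^ 2)) μ :=
    fun i j k => (rfg_int_zzk hmeas hm6int i j k).const_mul _
  rw [integral_finset_sum _ fun i _ => integrable_finset_sum _ fun j _ =>
    integrable_finset_sum _ fun k _ => hint i j k]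
  rw [Finset.sum_congr rfl fun i (_ : i ∈ Finset.univ) => integral_finset_sum _ fun j _ =>
    integrable_finset_sum _ fun k _ => hint i j k]
  rw [Finset.sum_congr rfl fun i (_ : i ∈ Finset.univ) =>
    Finset.sum_congr rfl fun j (_ : j ∈ Finset.univ) =>
      integral_finset_sum _ fun k _ => hint i j k]
  simp only [integral_const_mul]
  -- off-diagonal terms vanish
  have hsum : ∀ i : Fin d, (∑ j, ∑ k, g i * g j * ∫ ω, z ω i * z ω j * z ω k ^ 2 ∂μ)
      = g i * g i * (κ₄ * σ ^ 4 + ((d : ℝ) - 1) * (σ ^ 2 * σ ^ 2)) := by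
    intro i
    rw [Finset.sum_eq_single i ?blah ?bluh]
    case blah =>
      intro j _ hji
      rw [Finset.sum_congr rfl fun k (_ : k ∈ Finset.univ) => by
        rw [rfg_S hmeas hindep hm6int hm1 hm2 hm3 hm4 i j k (Ne.symm hji), mul_zero]]
      simp
    case bluh => exact fun hi => absurd (Finset.mem_univ i) hi
    -- diagonal: sum over k
    have hk : ∀ k : Fin d, ∫ ω, z ω i * z ω i * z ω k ^ 2 ∂μ
        = if k = i then κ₄ * σ ^ 4 else σ ^ 2 * σ ^ 2 := by
      intro k
      rcases eq_or_ne k i with rfl | hki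
      · rw [if_pos rfl, show (fun ω => z ω k * z ω k * z ω k ^ 2) = fun ω => z ω k ^ 4 by
          funext ω; ring]
        exact hm4 k
      · rw [if_neg hki, show (fun ω => z ω i * z ω i * z ω k ^ 2)
          = fun ω => z ω i ^ 2 * z ω k ^ 2 by funext ω; ring]
        rw [rfg_integral_pair hmeas hindep hm6int (Ne.symm hki) (by omega), hm2 i, hm2 k]
    rw [Finset.sum_congr rfl fun k (_ : k ∈ Finset.univ) => by rw [hk k], ← Finset.mul_sum,
      ← Finset.add_sum_erase Finset.univ _ (Finset.mem_univ i), if_pos rfl,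
      Finset.sum_congr rfl fun k hk' => if_neg (Finset.mem_erase.mp hk').1,
      Finset.sum_const, nsmul_eq_mul,
      Finset.card_erase_of_mem (Finset.mem_univ i), Finset.card_univ, Fintype.card_fin,
      rfg_cast1 hd]
  rw [Finset.sum_congr rfl fun i _ => hsum i, rfg_normsq, Finset.mul_sum]
  exact Finset.sum_congr rfl fun i _ => by ring
end
section
variable {d : ℕ} {Ω : Type*} [MeasurableSpace Ω] {μ : Measure Ω} [IsProbabilityMeasure μ]
  {z : Ω → EuclideanSpace ℝ (Fin d)}

private lemma rfg_norm6_expand (v : EuclideanSpace ℝ (Fin d)) :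
    ‖v‖ ^ 6 = ∑ i, ∑ j, ∑ k, v i ^ 2 * v j ^ 2 * v k ^ 2 := by
  rw [show ‖v‖ ^ 6 = (‖v‖ ^ 2) ^ 3 by ring, rfg_normsq,
    show (∑ i, v i ^ 2) ^ 3 = ((∑ i, v i ^ 2) * (∑ j, v j ^ 2)) * (∑ k, v k ^ 2) by ring,
    Finset.sum_mul_sum, Finset.sum_mul]
  exact Finset.sum_congr rfl fun i _ => by rw [Finset.sum_mul_sum]

variable (hmeas : ∀ i, Measurable fun ω => z ω i)
  (hm6int : ∀ i, Integrable (fun ω => z ω i ^ 6) μ)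

include hmeas hm6int in
private lemma rfg_norm6_integrable : Integrable (fun ω => ‖z ω‖ ^ 6) μ := by
  have : (fun ω => ‖z ω‖ ^ 6)
      = fun ω => ∑ i, ∑ j, ∑ k, z ω i ^ 2 * z ω j ^ 2 * z ω k ^ 2 :=
    funext fun ω => rfg_norm6_expand (z ω)
  rw [this]
  exact integrable_finset_sum _ fun i _ => integrable_finset_sum _ fun j _ =>
    integrable_finset_sum _ fun k _ => rfg_integrable_term hmeas hm6int i j k (by omega)

include hmeas hm6int in
private lemma rfg_inner_sq_integrable (g : EuclideanSpace ℝ (Fin d)) :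
    Integrable (fun ω => (inner ℝ (z ω) g : ℝ) ^ 2) μ := by
  have : (fun ω => (inner ℝ (z ω) g : ℝ) ^ 2)
      = fun ω => ∑ i, ∑ j, g i * g j * (z ω i * z ω j) :=
    funext fun ω => rfg_inner_sq_expand (z ω) g
  rw [this]
  exact integrable_finset_sum _ fun i _ => integrable_finset_sum _ fun j _ =>
    (rfg_int_zz hmeas hm6int i j).const_mul _

include hmeas hm6int in
private lemma rfg_inner_sq_norm_integrable (g : EuclideanSpace ℝ (Fin d)) :
    Integrable (fun ω => (inner ℝ (z ω) g : ℝ) ^ 2 * ‖z ω‖ ^ 2) μ := by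
  have : (fun ω => (inner ℝ (z ω) g : ℝ) ^ 2 * ‖z ω‖ ^ 2)
      = fun ω => ∑ i, ∑ j, ∑ k, g i * g j * (z ω i * z ω j * z ω k ^ 2) :=
    funext fun ω => rfg_inner_sq_norm_expand (z ω) g
  rw [this]
  exact integrable_finset_sum _ fun i _ => integrable_finset_sum _ fun j _ =>
    integrable_finset_sum _ fun k _ => (rfg_int_zzk hmeas hm6int i j k).const_mul _

include hmeas hm6int in
private lemma rfg_norm53_integrable : Integrable (fun ω => ‖z ω‖ ^ 5 + ‖z ω‖ ^ 3) μ := by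
  have hzm : Measurable z := (WithLp.measurable_toLp 2 _).comp (measurable_pi_iff.mpr hmeas)
  have hnm : Measurable fun ω => ‖z ω‖ := hzm.norm
  have hdom : Integrable (fun ω => 2 + 2 * ‖z ω‖ ^ 6) μ :=
    (integrable_const 2).add ((rfg_norm6_integrable hmeas hm6int).const_mul 2)
  refine hdom.mono ((hnm.pow_const 5).add (hnm.pow_const 3)).aestronglyMeasurable
    (ae_of_all _ fun ω => ?_)
  have ht : (0:ℝ) ≤ ‖z ω‖ := norm_nonneg _
  set t := ‖z ω‖
  have hb : t ^ 5 + t ^ 3 ≤ 2 + 2 * t ^ 6 := by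
    rcases le_total t 1 with h1 | h1
    · have h5 : t ^ 5 ≤ 1 := pow_le_one₀ ht h1
      have h3 : t ^ 3 ≤ 1 := pow_le_one₀ ht h1
      nlinarith [pow_nonneg ht 6]
    · have h5 : t ^ 5 ≤ t ^ 6 := pow_le_pow_right₀ h1 (by omega)
      have h3 : t ^ 3 ≤ t ^ 6 := pow_le_pow_right₀ h1 (by omega)
      nlinarith
  rw [Real.norm_eq_abs, Real.norm_eq_abs]
  have h0 : (0:ℝ) ≤ t ^ 5 + t ^ 3 := by positivity
  rw [abs_of_nonneg h0]
  exact hb.trans (le_abs_self _)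

private lemma rfg_ptwise {D p aa G c : ℝ} (ha : 0 ≤ aa) (hG : 0 ≤ G)
    (hCS : |p| ≤ aa * G) (h1 : p ≤ D) (h2 : D ≤ p + c / 2 * aa ^ 2) :
    D ^ 2 * aa ^ 2 - 2 * D * p + G ^ 2
      ≤ (c / 2) ^ 2 * aa ^ 6 + c * G * (aa ^ 5 + aa ^ 3)
        + (p ^ 2 * aa ^ 2 - 2 * p ^ 2 + G ^ 2) := by
  obtain ⟨e, rfl⟩ : ∃ e, D = p + e := ⟨D - p, by ring⟩
  have he0 : 0 ≤ e := by linarith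
  have hec : e ≤ c / 2 * aa ^ 2 := by linarith
  obtain ⟨hp1, hp2⟩ := abs_le.mp hCS
  have hkey : p * (aa ^ 2 - 1) ≤ aa * G * (aa ^ 2 + 1) := by
    have haG : 0 ≤ aa * G := mul_nonneg ha hG
    rcases le_total 1 (aa ^ 2) with h | h
    · nlinarith
    · nlinarith
  have g1 : e ^ 2 * aa ^ 2 ≤ (c / 2 * aa ^ 2) ^ 2 * aa ^ 2 := by
    have h' : e * e ≤ (c / 2 * aa ^ 2) * (c / 2 * aa ^ 2) :=
      mul_le_mul hec hec he0 (he0.trans hec)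
    have := mul_le_mul_of_nonneg_right h' (pow_nonneg ha 2)
    nlinarith [this]
  have g2 : e * (p * (aa ^ 2 - 1)) ≤ e * (aa * G * (aa ^ 2 + 1)) :=
    mul_le_mul_of_nonneg_left hkey he0
  have g3 : e * (aa * G * (aa ^ 2 + 1)) ≤ c / 2 * aa ^ 2 * (aa * G * (aa ^ 2 + 1)) :=
    mul_le_mul_of_nonneg_right hec (by positivity)
  nlinarith [g1, g2, g3]
end

/-- The (randomized) forward-mode gradient `∇_{z,h}^FM f(x) = ∇_{z,h} f(x) · z`, where
`∇_{z,h} f(x)` is the forward difference `(f(x+hz) − f(x))/h` for `h ≠ 0` and the exact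
directional derivative `zᵀ∇f(x)` for `h = 0`. -/
noncomputable def RFG {d : ℕ} (f : EuclideanSpace ℝ (Fin d) → ℝ)
    (x z : EuclideanSpace ℝ (Fin d)) (h : ℝ) : EuclideanSpace ℝ (Fin d) :=
  (if h = 0 then (inner ℝ z (gradient f x) : ℝ) else (f (x + h • z) - f x) / h) • z

/-- Theorem 3.6 of the paper. For `f` continuously differentiable, convex and
`L`-strongly smooth, and `z` a random vector with i.i.d. components having zero first and third
moments, second moment `σ²`, and finite moments up to order six (standardized moments `κ₄, κ₆`),
for any `h ≥ 0` and any `x`: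
`E[‖∇_{z,h}^FM f(x) − ∇f(x)‖²] ≤ (h²L²/2)σ⁶(κ₆+(d−2+3κ₄)(d−1))d
  + hL‖∇f(x)‖ E[‖z‖⁵+‖z‖³] + ((d+κ₄−1)σ⁴ − 2σ² + 1)‖∇f(x)‖²`. -/
theorem stmt_1 {d : ℕ} (hd : 0 < d)
    {Ω : Type*} [MeasurableSpace Ω] (μ : Measure Ω) [IsProbabilityMeasure μ]
    (f : EuclideanSpace ℝ (Fin d) → ℝ) (hf : ContDiff ℝ 1 f) (L : ℝ)
    (hconv_smooth : ∀ x y : EuclideanSpace ℝ (Fin d),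
      (inner ℝ (gradient f x) (y - x) : ℝ) ≤ f y - f x ∧
      f y - f x ≤ (inner ℝ (gradient f x) (y - x) : ℝ) + L / 2 * ‖y - x‖ ^ 2)
    (z : Ω → EuclideanSpace ℝ (Fin d))
    (hmeas : ∀ i, Measurable fun ω => z ω i)
    (hindep : iIndepFun (m := fun _ : Fin d => (inferInstance : MeasurableSpace ℝ))
      (fun i ω => z ω i) μ)
    (hident : ∀ i j : Fin d, IdentDistrib (fun ω => z ω i) (fun ω => z ω j) μ μ)
    (σ κ₄ κ₆ : ℝ) (hσ : 0 < σ)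
    (hm1 : ∀ i, ∫ ω, z ω i ∂μ = 0)
    (hm2 : ∀ i, ∫ ω, z ω i ^ 2 ∂μ = σ ^ 2)
    (hm3 : ∀ i, ∫ ω, z ω i ^ 3 ∂μ = 0)
    (hm4 : ∀ i, ∫ ω, z ω i ^ 4 ∂μ = κ₄ * σ ^ 4)
    (hm6int : ∀ i, Integrable (fun ω => z ω i ^ 6) μ)
    (hm6 : ∀ i, ∫ ω, z ω i ^ 6 ∂μ = κ₆ * σ ^ 6) :
    ∀ h : ℝ, 0 ≤ h → ∀ x : EuclideanSpace ℝ (Fin d),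
      ∫ ω, ‖RFG f x (z ω) h - gradient f x‖ ^ 2 ∂μ
        ≤ h ^ 2 * L ^ 2 / 2 * σ ^ 6 * (κ₆ + ((d : ℝ) - 2 + 3 * κ₄) * ((d : ℝ) - 1)) * d
          + h * L * ‖gradient f x‖ * ∫ ω, (‖z ω‖ ^ 5 + ‖z ω‖ ^ 3) ∂μ
          + (((d : ℝ) + κ₄ - 1) * σ ^ 4 - 2 * σ ^ 2 + 1) * ‖gradient f x‖ ^ 2 := by
  intro h hh x
  set g := gradient f x with hgdef
  set D : Ω → ℝ :=
    fun ω => if h = 0 then (inner ℝ (z ω) g : ℝ) else (f (x + h • z ω) - f x) / h with hDdef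
  have hRFG : ∀ ω, RFG f x (z ω) h = D ω • z ω := fun ω => rfl
  -- bounds on the forward difference
  have hbound : ∀ ω, (inner ℝ (z ω) g : ℝ) ≤ D ω
      ∧ D ω ≤ (inner ℝ (z ω) g : ℝ) + h * L / 2 * ‖z ω‖ ^ 2 := by
    intro ω
    by_cases h0 : h = 0
    · simp only [hDdef, if_pos h0]
      refine ⟨le_refl _, ?_⟩
      rw [h0]
      norm_num
    · have hpos : 0 < h := lt_of_le_of_ne hh (Ne.symm h0)
      simp only [hDdef, if_neg h0]
      obtain ⟨hlo, hhi⟩ := hconv_smooth x (x + h • z ω)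
      rw [add_sub_cancel_left, real_inner_smul_right] at hlo hhi
      have hpz : (inner ℝ (z ω) g : ℝ) = inner ℝ g (z ω) := real_inner_comm _ _
      have hn : ‖h • z ω‖ ^ 2 = h ^ 2 * ‖z ω‖ ^ 2 := by
        rw [norm_smul, mul_pow, Real.norm_eq_abs, sq_abs]
      rw [hn] at hhi
      constructor
      · rw [le_div_iff₀ hpos, hpz]
        linarith
      · rw [div_le_iff₀ hpos, hpz]
        nlinarith
  -- the dominating function
  set F : Ω → ℝ := fun ω => (h * L / 2) ^ 2 * ‖z ω‖ ^ 6
      + h * L * ‖g‖ * (‖z ω‖ ^ 5 + ‖z ω‖ ^ 3)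
      + ((inner ℝ (z ω) g : ℝ) ^ 2 * ‖z ω‖ ^ 2 - 2 * (inner ℝ (z ω) g : ℝ) ^ 2 + ‖g‖ ^ 2)
    with hFdef
  have I6 := rfg_norm6_integrable hmeas hm6int
  have I53 := rfg_norm53_integrable hmeas hm6int
  have Ip2 := rfg_inner_sq_integrable hmeas hm6int g
  have Ipn := rfg_inner_sq_norm_integrable hmeas hm6int g
  have IA : Integrable (fun ω => (h * L / 2) ^ 2 * ‖z ω‖ ^ 6) μ := I6.const_mul _
  have IB : Integrable (fun ω => h * L * ‖g‖ * (‖z ω‖ ^ 5 + ‖z ω‖ ^ 3)) μ := I53.const_mul _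
  have Ip2m : Integrable (fun ω => 2 * (inner ℝ (z ω) g : ℝ) ^ 2) μ := Ip2.const_mul 2
  have ICsub : Integrable (fun ω => (inner ℝ (z ω) g : ℝ) ^ 2 * ‖z ω‖ ^ 2
      - 2 * (inner ℝ (z ω) g : ℝ) ^ 2) μ := Ipn.sub Ip2m
  have IC : Integrable (fun ω => (inner ℝ (z ω) g : ℝ) ^ 2 * ‖z ω‖ ^ 2
      - 2 * (inner ℝ (z ω) g : ℝ) ^ 2 + ‖g‖ ^ 2) μ := ICsub.add (integrable_const _)
  have IAB : Integrable (fun ω => (h * L / 2) ^ 2 * ‖z ω‖ ^ 6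
      + h * L * ‖g‖ * (‖z ω‖ ^ 5 + ‖z ω‖ ^ 3)) μ := IA.add IB
  have IF : Integrable F μ := IAB.add IC
  -- pointwise inequality
  have hpt : ∀ ω, ‖RFG f x (z ω) h - g‖ ^ 2 ≤ F ω := by
    intro ω
    rw [hRFG ω]
    have hnorm : ‖D ω • z ω - g‖ ^ 2
        = (D ω) ^ 2 * ‖z ω‖ ^ 2 - 2 * (D ω) * (inner ℝ (z ω) g : ℝ) + ‖g‖ ^ 2 := by
      rw [norm_sub_sq_real, real_inner_smul_left, norm_smul, mul_pow, Real.norm_eq_abs,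
        sq_abs]
      ring
    rw [hnorm, hFdef]
    obtain ⟨hb1, hb2⟩ := hbound ω
    have := rfg_ptwise (c := h * L) (norm_nonneg (z ω)) (norm_nonneg g)
      (abs_real_inner_le_norm (z ω) g) hb1 (by rw [show h * L / 2 = h * L / 2 from rfl]; linarith)
    convert this using 2 <;> ring
  -- integrate
  calc ∫ ω, ‖RFG f x (z ω) h - g‖ ^ 2 ∂μ ≤ ∫ ω, F ω ∂μ := by
        refine integral_mono_of_nonneg (ae_of_all _ fun ω => by positivity) IF
          (ae_of_all _ hpt)
    _ = (h * L / 2) ^ 2 * ∫ ω, ‖z ω‖ ^ 6 ∂μ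
        + h * L * ‖g‖ * (∫ ω, (‖z ω‖ ^ 5 + ‖z ω‖ ^ 3) ∂μ)
        + ((∫ ω, (inner ℝ (z ω) g : ℝ) ^ 2 * ‖z ω‖ ^ 2 ∂μ)
            - 2 * ∫ ω, (inner ℝ (z ω) g : ℝ) ^ 2 ∂μ + ‖g‖ ^ 2) := by
        rw [hFdef]
        rw [integral_add IAB IC, integral_add IA IB,
          integral_add ICsub (integrable_const _),
          integral_sub Ipn Ip2m, integral_const_mul, integral_const_mul,
          integral_const_mul, integral_const]
        simp [measure_univ]
    _ ≤ _ := by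
        rw [rfg_norm6 hd hmeas hindep hm2 hm4 hm6int hm6,
          rfg_inner_sq_integral hmeas hindep hm6int hm1 hm2 g,
          rfg_inner_sq_norm_integral hmeas hindep hm6int hd hm1 hm2 hm3 hm4 g]
        have hN : 0 ≤ σ ^ 6 * (κ₆ + ((d : ℝ) - 2 + 3 * κ₄) * ((d : ℝ) - 1)) * d := by
          rw [← rfg_norm6 hd hmeas hindep hm2 hm4 hm6int hm6]
          exact integral_nonneg fun ω => by positivity
        have hquad : (h * L / 2) ^ 2 ≤ h ^ 2 * L ^ 2 / 2 := by nlinarith [sq_nonneg (h * L)]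
        have heq : (κ₄ * σ ^ 4 + ((d : ℝ) - 1) * (σ ^ 2 * σ ^ 2)) * ‖g‖ ^ 2
            - 2 * (σ ^ 2 * ‖g‖ ^ 2) + ‖g‖ ^ 2
            = (((d : ℝ) + κ₄ - 1) * σ ^ 4 - 2 * σ ^ 2 + 1) * ‖g‖ ^ 2 := by ring
        rw [heq]
        have := mul_le_mul_of_nonneg_right hquad hN
        linarith [this]
end

section
/- Let f: ℝ^d → ℝ be continuously differentiable with ∇f(x) ≠ 0. Let z = (z₁,…,z_d) be a random vector whose components are i.i.d. from a probability distribution with zero first and third moments, second moment σ², and finite fourth moment with kurtosis κ₄. Then the expected relative squared error satisfies E[‖(zᵀ∇f(x))·z − ∇f(x)‖²/‖∇f(x)‖²] = 1 − 1/(d + κ₄ − 1) + (d + κ₄ − 1)·(σ² − 1/(d + κ₄ − 1))²; in particular, over all σ² > 0 it is minimized exactly at σ² = 1/(d + κ₄ − 1), where it equals 1 − 1/(d + κ₄ − 1). -/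
open MeasureTheory ProbabilityTheory

lemma aux_abs_pow_le (t : ℝ) {k : ℕ} (hk : k ≤ 4) : ‖t ^ k‖ ≤ 1 + t ^ 4 := by
  rw [Real.norm_eq_abs, abs_pow]
  rcases le_total |t| 1 with h | h
  · calc |t| ^ k ≤ 1 := pow_le_one₀ (abs_nonneg t) h
      _ ≤ 1 + t ^ 4 := le_add_of_nonneg_right (by positivity)
  · calc |t| ^ k ≤ |t| ^ 4 := pow_le_pow_right₀ h hk
      _ = t ^ 4 := by rw [← abs_pow]; exact abs_of_nonneg (by positivity)
      _ ≤ 1 + t ^ 4 := le_add_of_nonneg_left one_pos.le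

/-- For `f` continuously differentiable with `∇f(x) ≠ 0`, and `z` a random
vector with i.i.d. components having zero first and third moments, second moment `σ²` and
kurtosis `κ₄`, the expected relative squared error of the RFG equals
`1 − 1/(d+κ₄−1) + (d+κ₄−1)(σ² − 1/(d+κ₄−1))²`; in particular, over all `σ² > 0` this
quantity is minimized exactly at `σ² = 1/(d+κ₄−1)`, where it equals `1 − 1/(d+κ₄−1)`. -/
theorem stmt_2 {d : ℕ} (hd : 0 < d)
    {Ω : Type*} [MeasurableSpace Ω] (μ : Measure Ω) [IsProbabilityMeasure μ]
    (f : EuclideanSpace ℝ (Fin d) → ℝ) (hf : ContDiff ℝ 1 f)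
    (z : Ω → EuclideanSpace ℝ (Fin d))
    (hmeas : ∀ i, Measurable fun ω => z ω i)
    (hindep : iIndepFun (m := fun _ : Fin d => (inferInstance : MeasurableSpace ℝ))
      (fun i ω => z ω i) μ)
    (hident : ∀ i j : Fin d, IdentDistrib (fun ω => z ω i) (fun ω => z ω j) μ μ)
    (σ κ₄ : ℝ) (hσ : 0 < σ)
    (hm1 : ∀ i, ∫ ω, z ω i ∂μ = 0)
    (hm2 : ∀ i, ∫ ω, z ω i ^ 2 ∂μ = σ ^ 2)
    (hm3 : ∀ i, ∫ ω, z ω i ^ 3 ∂μ = 0)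
    (hm4int : ∀ i, Integrable (fun ω => z ω i ^ 4) μ)
    (hm4 : ∀ i, ∫ ω, z ω i ^ 4 ∂μ = κ₄ * σ ^ 4)
    (x : EuclideanSpace ℝ (Fin d)) (hx : gradient f x ≠ 0) :
    (∫ ω, ‖(inner ℝ (z ω) (gradient f x) : ℝ) • z ω - gradient f x‖ ^ 2
          / ‖gradient f x‖ ^ 2 ∂μ
        = 1 - 1 / ((d : ℝ) + κ₄ - 1)
          + ((d : ℝ) + κ₄ - 1) * (σ ^ 2 - 1 / ((d : ℝ) + κ₄ - 1)) ^ 2) ∧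
    (∀ s : ℝ, 0 < s →
      (1 - 1 / ((d : ℝ) + κ₄ - 1)
          ≤ 1 - 1 / ((d : ℝ) + κ₄ - 1)
            + ((d : ℝ) + κ₄ - 1) * (s - 1 / ((d : ℝ) + κ₄ - 1)) ^ 2) ∧
      (1 - 1 / ((d : ℝ) + κ₄ - 1)
            + ((d : ℝ) + κ₄ - 1) * (s - 1 / ((d : ℝ) + κ₄ - 1)) ^ 2
          = 1 - 1 / ((d : ℝ) + κ₄ - 1)
        ↔ s = 1 / ((d : ℝ) + κ₄ - 1))) := by
  classical
  set g := gradient f x with hgdef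
  set D : ℝ := (d : ℝ) + κ₄ - 1 with hDdef
  have hG2 : (0 : ℝ) < ‖g‖ ^ 2 := by
    have : 0 < ‖g‖ := norm_pos_iff.mpr hx
    positivity
  -- integrability of powers of coordinates
  have hint : ∀ (i : Fin d) (k : ℕ), k ≤ 4 → Integrable (fun ω => z ω i ^ k) μ := by
    intro i k hk
    refine Integrable.mono' ((integrable_const (1:ℝ)).add (hm4int i))
      ((hmeas i).pow_const k).aestronglyMeasurable ?_
    filter_upwards with ω
    exact aux_abs_pow_le (z ω i) hk
  have hint1 : ∀ i, Integrable (fun ω => z ω i) μ := by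
    intro i; simpa using hint i 1 (by norm_num)
  -- second order products
  have hE2int : ∀ i j : Fin d, Integrable (fun ω => z ω i * z ω j) μ := by
    intro i j
    rcases eq_or_ne i j with rfl | hij
    · simpa [sq] using hint i 2 (by norm_num)
    · exact (hindep.indepFun hij).integrable_mul (hint1 i) (hint1 j)
  have hE2 : ∀ i j : Fin d, ∫ ω, z ω i * z ω j ∂μ = if i = j then σ ^ 2 else 0 := by
    intro i j
    rcases eq_or_ne i j with rfl | hij
    · rw [if_pos rfl]; simpa [sq] using hm2 i
    · rw [if_neg hij]
      have h := (hindep.indepFun hij).integral_mul_eq_mul_integral (hint1 i).aestronglyMeasurable (hint1 j).aestronglyMeasurable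
      simpa [Pi.mul_apply, hm1 i] using h
  -- fourth order products
  have hE3 : ∀ i j k : Fin d,
      Integrable (fun ω => z ω i * z ω j * z ω k ^ 2) μ ∧
      ∫ ω, z ω i * z ω j * z ω k ^ 2 ∂μ
        = if i = j then (if i = k then κ₄ * σ ^ 4 else σ ^ 4) else 0 := by
    intro i j k
    rcases eq_or_ne i j with rfl | hij
    · rcases eq_or_ne i k with rfl | hik
      · have he : (fun ω => z ω i * z ω i * z ω i ^ 2) = fun ω => z ω i ^ 4 := by
          funext ω; ring
        rw [he]
        exact ⟨hm4int i, by simp [hm4 i]⟩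
      · have hIndep : IndepFun (fun ω => z ω i ^ 2) (fun ω => z ω k ^ 2) μ :=
          (hindep.indepFun hik).comp (measurable_id.pow_const 2) (measurable_id.pow_const 2)
        have he : (fun ω => z ω i * z ω i * z ω k ^ 2)
            = (fun ω => z ω i ^ 2) * fun ω => z ω k ^ 2 := by
          funext ω; simp only [Pi.mul_apply]; ring
        rw [he]
        refine ⟨hIndep.integrable_mul (hint i 2 (by norm_num)) (hint k 2 (by norm_num)), ?_⟩
        rw [hIndep.integral_mul_eq_mul_integral (hint i 2 (by norm_num)).aestronglyMeasurable (hint k 2 (by norm_num)).aestronglyMeasurable]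
        rw [hm2 i, hm2 k, if_pos rfl, if_neg hik]
        ring
    · rw [if_neg hij]
      rcases eq_or_ne k i with rfl | hki
      · -- z k ^ 3 * z j
        have hIndep : IndepFun (fun ω => z ω k ^ 3) (fun ω => z ω j) μ :=
          (hindep.indepFun hij).comp (measurable_id.pow_const 3) measurable_id
        have he : (fun ω => z ω k * z ω j * z ω k ^ 2)
            = (fun ω => z ω k ^ 3) * fun ω => z ω j := by
          funext ω; simp only [Pi.mul_apply]; ring
        rw [he]
        refine ⟨hIndep.integrable_mul (hint k 3 (by norm_num)) (hint1 j), ?_⟩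
        rw [hIndep.integral_mul_eq_mul_integral (hint k 3 (by norm_num)).aestronglyMeasurable (hint1 j).aestronglyMeasurable]
        rw [hm3 k, zero_mul]
      · rcases eq_or_ne k j with rfl | hkj
        · have hIndep : IndepFun (fun ω => z ω i) (fun ω => z ω k ^ 3) μ :=
            (hindep.indepFun hij).comp measurable_id (measurable_id.pow_const 3)
          have he : (fun ω => z ω i * z ω k * z ω k ^ 2)
              = (fun ω => z ω i) * fun ω => z ω k ^ 3 := by
            funext ω; simp only [Pi.mul_apply]; ring
          rw [he]
          refine ⟨hIndep.integrable_mul (hint1 i) (hint k 3 (by norm_num)), ?_⟩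
          rw [hIndep.integral_mul_eq_mul_integral (hint1 i).aestronglyMeasurable (hint k 3 (by norm_num)).aestronglyMeasurable]
          rw [hm1 i, zero_mul]
        · -- all distinct
          have hIndep0 : IndepFun (fun ω => (z ω i, z ω j)) (fun ω => z ω k) μ :=
            hindep.indepFun_prodMk hmeas i j k (Ne.symm hki) (Ne.symm hkj)
          have hIndep : IndepFun (fun ω => z ω i * z ω j) (fun ω => z ω k ^ 2) μ :=
            hIndep0.comp (measurable_fst.mul measurable_snd) (measurable_id.pow_const 2)
          have he : (fun ω => z ω i * z ω j * z ω k ^ 2)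
              = (fun ω => z ω i * z ω j) * fun ω => z ω k ^ 2 := by
            funext ω; simp only [Pi.mul_apply]
          rw [he]
          refine ⟨hIndep.integrable_mul (hE2int i j) (hint k 2 (by norm_num)), ?_⟩
          rw [hIndep.integral_mul_eq_mul_integral (hE2int i j).aestronglyMeasurable (hint k 2 (by norm_num)).aestronglyMeasurable]
          have h2 := hE2 i j
          rw [if_neg hij] at h2
          rw [h2, zero_mul]
  -- norm as a sum of squares
  have hnormsum : ∀ v : EuclideanSpace ℝ (Fin d), ‖v‖ ^ 2 = ∑ i, v i ^ 2 := by
    intro v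
    rw [EuclideanSpace.norm_eq, Real.sq_sqrt (by positivity)]
    simp [Real.norm_eq_abs, sq_abs]
  have hinner : ∀ ω, (inner ℝ (z ω) g : ℝ) = ∑ i, z ω i * g i := by
    intro ω
    simp [PiLp.inner_apply, RCLike.inner_apply, conj_trivial]
    exact Finset.sum_congr rfl fun i _ => mul_comm _ _
  -- pointwise expansion
  have hpt : ∀ ω, ‖(inner ℝ (z ω) g : ℝ) • z ω - g‖ ^ 2
      = (∑ i, ∑ j, ∑ k, (g i * g j) * (z ω i * z ω j * z ω k ^ 2))
        - 2 * (∑ i, ∑ j, (g i * g j) * (z ω i * z ω j)) + ‖g‖ ^ 2 := by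
    intro ω
    set a : ℝ := (inner ℝ (z ω) g : ℝ) with ha
    have hexp : ‖a • z ω - g‖ ^ 2 = a ^ 2 * ‖z ω‖ ^ 2 - 2 * (a * a) + ‖g‖ ^ 2 := by
      rw [norm_sub_sq_real, norm_smul, real_inner_smul_left, ← ha, mul_pow]
      rw [Real.norm_eq_abs, sq_abs]
    rw [hexp]
    have hS2 : a * a = ∑ i, ∑ j, (g i * g j) * (z ω i * z ω j) := by
      rw [ha, hinner ω, Finset.sum_mul_sum]
      exact Finset.sum_congr rfl fun i _ => Finset.sum_congr rfl fun j _ => by ring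
    have hS3 : a ^ 2 * ‖z ω‖ ^ 2
        = ∑ i, ∑ j, ∑ k, (g i * g j) * (z ω i * z ω j * z ω k ^ 2) := by
      rw [sq, hS2, hnormsum (z ω)]
      rw [Finset.sum_mul]
      refine Finset.sum_congr rfl fun i _ => ?_
      rw [Finset.sum_mul]
      refine Finset.sum_congr rfl fun j _ => ?_
      rw [Finset.mul_sum]
      exact Finset.sum_congr rfl fun k _ => by ring
    rw [hS3, hS2]
  -- integrability of the big sums
  have hInt3 : Integrable
      (fun ω => ∑ i, ∑ j, ∑ k : Fin d, (g i * g j) * (z ω i * z ω j * z ω k ^ 2)) μ := by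
    refine integrable_finset_sum _ fun i _ => integrable_finset_sum _ fun j _ =>
      integrable_finset_sum _ fun k _ => ((hE3 i j k).1.const_mul _)
  have hInt2 : Integrable
      (fun ω => ∑ i, ∑ j : Fin d, (g i * g j) * (z ω i * z ω j)) μ := by
    refine integrable_finset_sum _ fun i _ => integrable_finset_sum _ fun j _ =>
      ((hE2int i j).const_mul _)
  -- value of the triple sum integral
  have hsumk : ∀ i : Fin d,
      (∑ k : Fin d, if i = k then κ₄ * σ ^ 4 else σ ^ 4) = σ ^ 4 * D := by
    intro i
    have h : ∀ k : Fin d, (if i = k then κ₄ * σ ^ 4 else σ ^ 4)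
        = σ ^ 4 + (if i = k then κ₄ * σ ^ 4 - σ ^ 4 else 0) := by
      intro k; split <;> ring
    rw [Finset.sum_congr rfl fun k _ => h k, Finset.sum_add_distrib, Finset.sum_const,
      Finset.sum_ite_eq, if_pos (Finset.mem_univ i), Finset.card_univ, Fintype.card_fin]
    rw [hDdef]; push_cast; ring
  have hval3 : (∑ i, ∑ j, ∑ k : Fin d,
      (g i * g j) * ∫ ω, z ω i * z ω j * z ω k ^ 2 ∂μ) = ‖g‖ ^ 2 * (σ ^ 4 * D) := by
    have h1 : ∀ i j : Fin d, (∑ k : Fin d, (g i * g j) * ∫ ω, z ω i * z ω j * z ω k ^ 2 ∂μ)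
        = if i = j then g i * g j * (σ ^ 4 * D) else 0 := by
      intro i j
      rcases eq_or_ne i j with rfl | hij
      · rw [if_pos rfl]
        have : ∀ k : Fin d, (g i * g i) * ∫ ω, z ω i * z ω i * z ω k ^ 2 ∂μ
            = (g i * g i) * (if i = k then κ₄ * σ ^ 4 else σ ^ 4) := by
          intro k; rw [(hE3 i i k).2, if_pos rfl]
        rw [Finset.sum_congr rfl fun k _ => this k, ← Finset.mul_sum, hsumk i]
      · rw [if_neg hij]
        have : ∀ k : Fin d, (g i * g j) * ∫ ω, z ω i * z ω j * z ω k ^ 2 ∂μ = 0 := by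
          intro k; rw [(hE3 i j k).2, if_neg hij, mul_zero]
        rw [Finset.sum_congr rfl fun k _ => this k, Finset.sum_const_zero]
    rw [Finset.sum_congr rfl fun i _ => Finset.sum_congr rfl fun j _ => h1 i j]
    have h2 : ∀ i : Fin d, (∑ j : Fin d, if i = j then g i * g j * (σ ^ 4 * D) else 0)
        = g i ^ 2 * (σ ^ 4 * D) := by
      intro i
      rw [Finset.sum_ite_eq, if_pos (Finset.mem_univ i)]; ring
    rw [Finset.sum_congr rfl fun i _ => h2 i, ← Finset.sum_mul, ← hnormsum g]
  have hval2 : (∑ i, ∑ j : Fin d, (g i * g j) * ∫ ω, z ω i * z ω j ∂μ)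
      = ‖g‖ ^ 2 * σ ^ 2 := by
    have h1 : ∀ i j : Fin d, (g i * g j) * ∫ ω, z ω i * z ω j ∂μ
        = if i = j then g i * g j * σ ^ 2 else 0 := by
      intro i j
      rw [hE2 i j]
      split <;> ring
    rw [Finset.sum_congr rfl fun i _ => Finset.sum_congr rfl fun j _ => h1 i j]
    have h2 : ∀ i : Fin d, (∑ j : Fin d, if i = j then g i * g j * σ ^ 2 else 0)
        = g i ^ 2 * σ ^ 2 := by
      intro i
      rw [Finset.sum_ite_eq, if_pos (Finset.mem_univ i)]; ring
    rw [Finset.sum_congr rfl fun i _ => h2 i, ← Finset.sum_mul, ← hnormsum g]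
  -- main integral computation
  have hmain : ∫ ω, ‖(inner ℝ (z ω) g : ℝ) • z ω - g‖ ^ 2 / ‖g‖ ^ 2 ∂μ
      = σ ^ 4 * D - 2 * σ ^ 2 + 1 := by
    have hstep : ∫ ω, ‖(inner ℝ (z ω) g : ℝ) • z ω - g‖ ^ 2 / ‖g‖ ^ 2 ∂μ
        = (∫ ω, ((∑ i, ∑ j, ∑ k, (g i * g j) * (z ω i * z ω j * z ω k ^ 2))
            - 2 * (∑ i, ∑ j, (g i * g j) * (z ω i * z ω j)) + ‖g‖ ^ 2) ∂μ) / ‖g‖ ^ 2 := by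
      rw [← integral_div]
      exact integral_congr_ae (Filter.Eventually.of_forall fun ω => by
        dsimp only; rw [hpt ω])
    rw [hstep]
    have hI : ∫ ω, ((∑ i, ∑ j, ∑ k, (g i * g j) * (z ω i * z ω j * z ω k ^ 2))
        - 2 * (∑ i, ∑ j, (g i * g j) * (z ω i * z ω j)) + ‖g‖ ^ 2) ∂μ
        = ‖g‖ ^ 2 * (σ ^ 4 * D) - 2 * (‖g‖ ^ 2 * σ ^ 2) + ‖g‖ ^ 2 := by
      have hIntSub : Integrable (fun ω =>
          (∑ i, ∑ j, ∑ k : Fin d, (g i * g j) * (z ω i * z ω j * z ω k ^ 2))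
          - 2 * (∑ i, ∑ j : Fin d, (g i * g j) * (z ω i * z ω j))) μ :=
        hInt3.sub (hInt2.const_mul 2)
      rw [integral_add hIntSub (integrable_const _),
        integral_sub hInt3 (hInt2.const_mul 2), integral_const_mul _ _]
      have e3 : ∫ ω, (∑ i, ∑ j, ∑ k : Fin d, (g i * g j) * (z ω i * z ω j * z ω k ^ 2)) ∂μ
          = ‖g‖ ^ 2 * (σ ^ 4 * D) := by
        rw [integral_finset_sum _ fun i _ => (integrable_finset_sum _ fun j _ =>
          integrable_finset_sum _ fun k _ => ((hE3 i j k).1.const_mul _))]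
        rw [Finset.sum_congr rfl fun i _ => integral_finset_sum _ fun j _ =>
          (integrable_finset_sum _ fun k _ => ((hE3 i j k).1.const_mul _))]
        rw [Finset.sum_congr rfl fun i _ => Finset.sum_congr rfl fun j _ =>
          integral_finset_sum _ fun k _ => ((hE3 i j k).1.const_mul _)]
        rw [Finset.sum_congr rfl fun i _ => Finset.sum_congr rfl fun j _ =>
          Finset.sum_congr rfl fun k _ => integral_const_mul _ _]
        exact hval3
      have e2 : ∫ ω, (∑ i, ∑ j : Fin d, (g i * g j) * (z ω i * z ω j)) ∂μ
          = ‖g‖ ^ 2 * σ ^ 2 := by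
        rw [integral_finset_sum _ fun i _ => (integrable_finset_sum _ fun j _ =>
          ((hE2int i j).const_mul _))]
        rw [Finset.sum_congr rfl fun i _ => integral_finset_sum _ fun j _ =>
          ((hE2int i j).const_mul _)]
        rw [Finset.sum_congr rfl fun i _ => Finset.sum_congr rfl fun j _ =>
          integral_const_mul _ _]
        exact hval2
      rw [e3, e2]
      simp
    rw [hI]
    field_simp
  -- kurtosis at least 1
  have hκ : 1 ≤ κ₄ := by
    set i0 : Fin d := ⟨0, hd⟩
    have hnn : 0 ≤ ∫ ω, (z ω i0 ^ 2 - σ ^ 2) ^ 2 ∂μ :=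
      integral_nonneg fun ω => sq_nonneg _
    have hval : ∫ ω, (z ω i0 ^ 2 - σ ^ 2) ^ 2 ∂μ = κ₄ * σ ^ 4 - 2 * σ ^ 2 * σ ^ 2 + σ ^ 4 := by
      have he : (fun ω => (z ω i0 ^ 2 - σ ^ 2) ^ 2)
          = fun ω => z ω i0 ^ 4 - 2 * σ ^ 2 * z ω i0 ^ 2 + σ ^ 4 := by
        funext ω; ring
      have hIntSub : Integrable
          (fun ω => z ω i0 ^ 4 - 2 * σ ^ 2 * z ω i0 ^ 2) μ :=
        (hm4int i0).sub ((hint i0 2 (by norm_num)).const_mul _)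
      rw [he, integral_add hIntSub (integrable_const _),
        integral_sub (hm4int i0) ((hint i0 2 (by norm_num)).const_mul _),
        integral_const_mul _ _, hm2 i0, hm4 i0]
      simp
    rw [hval] at hnn
    nlinarith [pow_pos hσ 4, pow_pos hσ 2]
  have hD1 : 1 ≤ D := by
    rw [hDdef]
    have : (1 : ℝ) ≤ (d : ℝ) := by exact_mod_cast hd
    linarith
  have hD0 : D ≠ 0 := by linarith
  constructor
  · rw [hmain]
    field_simp
    ring
  · intro s hs
    constructor
    · have h1 : 0 ≤ D * (s - 1 / D) ^ 2 := mul_nonneg (by linarith) (sq_nonneg _)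
      linarith
    · rw [add_eq_left, mul_eq_zero, or_iff_right hD0, sq_eq_zero_iff, sub_eq_zero]
end

section
/- Let z = (z₁,…,z_d) be a random vector whose components are i.i.d. from a probability distribution with zero first, third, and fifth moments, second moment σ², and finite sixth moment; write κ₄, κ₆ for the fourth and sixth standardized moments. Then for every A ∈ ℝ^{m×d}, E[ ‖Az‖⁴ · ‖z‖² ] = σ⁶·Σ_{k,l=1}^m [ (κ₆ + (d−1)κ₄)·Σ_{i=1}^d A_{k,i}²A_{l,i}² + (d − 2 + 2κ₄)·Σ_{i≠j} (A_{k,i}²A_{l,j}² + 2A_{k,i}A_{l,i}A_{k,j}A_{l,j}) ]. -/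
open MeasureTheory ProbabilityTheory Matrix Finset

section Aux
variable {Ω : Type*} [MeasurableSpace Ω] {μ : Measure Ω}

lemma aux_pow_int [IsFiniteMeasure μ] {f : Ω → ℝ} (hf : Measurable f)
    (h6 : Integrable (fun ω => f ω ^ 6) μ) {n : ℕ} (hn : n ≤ 6) :
    Integrable (fun ω => f ω ^ n) μ := by
  refine Integrable.mono ((integrable_const (1:ℝ)).add h6)
    (hf.pow_const n).aestronglyMeasurable ?_
  filter_upwards with ω
  have h2 : (0:ℝ) ≤ f ω ^ 6 := by positivity
  rcases le_or_gt (|f ω|) 1 with h | h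
  · have h1 : |f ω| ^ n ≤ 1 := pow_le_one₀ (abs_nonneg _) h
    simp only [Real.norm_eq_abs, abs_pow, Pi.add_apply]
    rw [abs_of_nonneg (by show (0:ℝ) ≤ 1 + f ω ^ 6; linarith : (0:ℝ) ≤ (fun _ => (1:ℝ)) ω + f ω ^ 6)]
    simpa using by linarith [h1]
  · have h1 : |f ω| ^ n ≤ |f ω| ^ 6 := pow_le_pow_right₀ h.le hn
    have h3 : |f ω| ^ 6 = f ω ^ 6 := by
      rw [← abs_pow, abs_of_nonneg (by positivity)]
    simp only [Real.norm_eq_abs, abs_pow, Pi.add_apply]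
    rw [abs_of_nonneg (by show (0:ℝ) ≤ 1 + f ω ^ 6; linarith : (0:ℝ) ≤ (fun _ => (1:ℝ)) ω + f ω ^ 6)]
    simpa using by linarith [h3 ▸ h1]

lemma aux_prod {ι : Type*} [IsProbabilityMeasure μ] {f : ι → Ω → ℝ}
    (hindep : iIndepFun f μ)
    (hmeas : ∀ i, Measurable (f i)) (hint : ∀ i, Integrable (f i) μ) (s : Finset ι) :
    Integrable (fun ω => ∏ i ∈ s, f i ω) μ ∧
      ∫ ω, ∏ i ∈ s, f i ω ∂μ = ∏ i ∈ s, ∫ ω, f i ω ∂μ := by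
  classical
  induction s using Finset.cons_induction with
  | empty => simp
  | cons a s ha ih =>
    have hIndep : IndepFun (∏ j ∈ s, f j) (f a) μ :=
      hindep.indepFun_finsetProd_of_notMem hmeas ha
    have hps : (∏ j ∈ s, f j) = fun ω => ∏ j ∈ s, f j ω := by
      funext ω; simp [Finset.prod_apply]
    have hint1 : Integrable (∏ j ∈ s, f j) μ := hps ▸ ih.1
    have hmul : Integrable ((∏ j ∈ s, f j) * f a) μ :=
      hIndep.integrable_mul hint1 (hint a)
    have heq : (fun ω => ∏ i ∈ Finset.cons a s ha, f i ω)
        = (∏ j ∈ s, f j) * f a := by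
      funext ω; rw [Finset.prod_cons, Pi.mul_apply, Finset.prod_apply, mul_comm]
    constructor
    · rw [heq]; exact hmul
    · calc ∫ ω, ∏ i ∈ Finset.cons a s ha, f i ω ∂μ
          = ∫ ω, ((∏ j ∈ s, f j) * f a) ω ∂μ := by rw [← heq]
        _ = (∫ ω, (∏ j ∈ s, f j) ω ∂μ) * ∫ ω, f a ω ∂μ :=
            hIndep.integral_mul_eq_mul_integral hint1.aestronglyMeasurable (hint a).aestronglyMeasurable
        _ = ∏ i ∈ Finset.cons a s ha, ∫ ω, f i ω ∂μ := by
            rw [hps, Finset.prod_cons, ih.2, mul_comm]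

end Aux

/-- moment function -/
noncomputable def Mom (σ κ₄ κ₆ : ℝ) (n : ℕ) : ℝ :=
  if n = 0 then 1 else if n = 2 then σ^2 else if n = 4 then κ₄*σ^4
    else if n = 6 then κ₆*σ^6 else 0

lemma Mom_odd (σ κ₄ κ₆ : ℝ) {n : ℕ} (h : n % 2 = 1) : Mom σ κ₄ κ₆ n = 0 := by
  unfold Mom; split_ifs <;> first | rfl | (exfalso; omega)

def expE {d : ℕ} (i j p q r a : Fin d) : ℕ :=
  (if i = a then 1 else 0) + (if j = a then 1 else 0) + (if p = a then 1 else 0)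
    + (if q = a then 1 else 0) + (if r = a then 2 else 0)

lemma expE_le {d : ℕ} (i j p q r a : Fin d) : expE i j p q r a ≤ 6 := by
  unfold expE; split_ifs <;> omega

lemma prod_support {d : ℕ} (M : ℕ → ℝ) (hM0 : M 0 = 1) (e : Fin d → ℕ)
    (s : Finset (Fin d)) (h : ∀ a ∉ s, e a = 0) :
    ∏ a, M (e a) = ∏ a ∈ s, M (e a) :=
  (Finset.prod_subset (Finset.subset_univ s) (fun a _ ha => by rw [h a ha, hM0])).symm

section Sump
variable {d : ℕ} (M : ℕ → ℝ)

lemma Pzero (hModd : ∀ n, n % 2 = 1 → M n = 0) (i j p q r a : Fin d)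
    (h : ((if i = a then 1 else 0) + (if j = a then 1 else 0) + (if p = a then 1 else 0)
      + (if q = a then 1 else 0)) % 2 = 1) :
    ∏ x, M (expE i j p q r x) = 0 :=
  Finset.prod_eq_zero (Finset.mem_univ a)
    (hModd _ (by unfold expE; split_ifs at h ⊢ <;> omega))

lemma sum_all (hM0 : M 0 = 1) (i : Fin d) :
    ∑ r, ∏ a, M (expE i i i i r a) = M 6 + ((d:ℝ)-1)*(M 4 * M 2) := by
  have hd : 1 ≤ d := i.pos
  have step : ∀ r : Fin d, (∏ a, M (expE i i i i r a)) = if r = i then M 6 else M 4 * M 2 := by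
    intro r
    by_cases hr : r = i
    · subst hr
      rw [if_pos rfl, prod_support M hM0 _ {r} ?h0, Finset.prod_singleton]
      · congr 1; unfold expE; simp
      case h0 =>
        intro a ha
        rw [Finset.mem_singleton] at ha
        have : ¬ r = a := fun h => ha h.symm
        unfold expE; simp [this]
    · rw [if_neg hr, prod_support M hM0 _ {i, r} ?h1,
        Finset.prod_pair (fun h => hr h.symm)]
      · have e1 : expE i i i i r i = 4 := by
          unfold expE; simp [hr]
        have e2 : expE i i i i r r = 2 := by
          unfold expE; simp [show ¬ i = r from fun h => hr h.symm]
        rw [e1, e2]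
      case h1 =>
        intro a ha
        simp only [Finset.mem_insert, Finset.mem_singleton, not_or] at ha
        unfold expE
        simp [show ¬ i = a from fun h => ha.1 h.symm, show ¬ r = a from fun h => ha.2 h.symm]
  rw [Finset.sum_congr rfl (fun r _ => step r), ← Finset.add_sum_erase _ _ (Finset.mem_univ i),
    if_pos rfl]
  congr 1
  rw [Finset.sum_congr rfl (fun r hr => if_neg (Finset.ne_of_mem_erase hr)),
    Finset.sum_const, nsmul_eq_mul, Finset.card_erase_of_mem (Finset.mem_univ i),
    Finset.card_univ, Fintype.card_fin, Nat.cast_sub hd, Nat.cast_one]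

lemma sum_pair (hM0 : M 0 = 1) (x y : Fin d) (hxy : ¬ x = y) :
    ∑ r, ∏ a, M ((if x = a then 2 else 0) + (if y = a then 2 else 0) + (if r = a then 2 else 0))
      = M 4 * M 2 + M 4 * M 2 + ((d:ℝ)-2)*(M 2 * M 2 * M 2) := by
  have hd : 2 ≤ d := by
    have h1 := Finset.card_le_univ ({x, y} : Finset (Fin d))
    rwa [Finset.card_pair hxy, Fintype.card_fin] at h1
  have hyx : ¬ y = x := fun h => hxy h.symm
  set f : Fin d → Fin d → ℕ :=
    fun r a => (if x = a then 2 else 0) + (if y = a then 2 else 0) + (if r = a then 2 else 0)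
    with hf
  have step : ∀ r : Fin d, (∏ a, M (f r a))
      = if r = x then M 4 * M 2 else if r = y then M 2 * M 4 else M 2 * M 2 * M 2 := by
    intro r
    by_cases hrx : r = x
    · subst hrx
      rw [if_pos rfl, prod_support M hM0 _ {r, y} ?h0, Finset.prod_pair hxy]
      · have e1 : f r r = 4 := by simp [hf, hyx]
        have e2 : f r y = 2 := by simp [hf, hxy]
        rw [e1, e2]
      case h0 =>
        intro a ha
        simp only [Finset.mem_insert, Finset.mem_singleton, not_or] at ha
        simp [hf, show ¬ r = a from fun h => ha.1 h.symm, show ¬ y = a from fun h => ha.2 h.symm]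
    · by_cases hry : r = y
      · subst hry
        rw [if_neg hrx, if_pos rfl, prod_support M hM0 _ {x, r} ?h1, Finset.prod_pair hxy]
        · have e1 : f r x = 2 := by simp [hf, hyx, show ¬ x = r from fun h => hrx h.symm]
          have e2 : f r r = 4 := by simp [hf, show ¬ x = r from fun h => hrx h.symm]
          rw [e1, e2]
        case h1 =>
          intro a ha
          simp only [Finset.mem_insert, Finset.mem_singleton, not_or] at ha
          simp [hf, show ¬ x = a from fun h => ha.1 h.symm, show ¬ r = a from fun h => ha.2 h.symm]
      · rw [if_neg hrx, if_neg hry, prod_support M hM0 _ {x, y, r} ?h2]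
        · have hxr : ¬ x = r := fun h => hrx h.symm
          have hyr : ¬ y = r := fun h => hry h.symm
          rw [Finset.prod_insert (by simp [hxy, hxr]), Finset.prod_insert (by simp [hyr]),
            Finset.prod_singleton]
          have e1 : f r x = 2 := by simp [hf, hyx, hrx]
          have e2 : f r y = 2 := by simp [hf, hxy, hry]
          have e3 : f r r = 2 := by simp [hf, hxr, hyr]
          rw [e1, e2, e3, mul_assoc]
        case h2 =>
          intro a ha
          simp only [Finset.mem_insert, Finset.mem_singleton, not_or] at ha
          simp [hf, show ¬ x = a from fun h => ha.1 h.symm,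
            show ¬ y = a from fun h => ha.2.1 h.symm,
            show ¬ r = a from fun h => ha.2.2 h.symm]
  rw [Finset.sum_congr rfl (fun r _ => step r),
    ← Finset.add_sum_erase _ _ (Finset.mem_univ x), if_pos rfl]
  have hy : y ∈ Finset.univ.erase x := Finset.mem_erase.2 ⟨hyx, Finset.mem_univ y⟩
  rw [← Finset.add_sum_erase _ _ hy, if_neg hyx, if_pos rfl]
  have hrest : ∀ r ∈ (Finset.univ.erase x).erase y,
      (if r = x then M 4 * M 2 else if r = y then M 2 * M 4 else M 2 * M 2 * M 2)
        = M 2 * M 2 * M 2 := by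
    intro r hr
    rw [Finset.mem_erase, Finset.mem_erase] at hr
    rw [if_neg hr.2.1, if_neg hr.1]
  rw [Finset.sum_congr rfl hrest, Finset.sum_const, nsmul_eq_mul,
    Finset.card_erase_of_mem hy, Finset.card_erase_of_mem (Finset.mem_univ x),
    Finset.card_univ, Fintype.card_fin]
  have : ((d - 1 - 1 : ℕ) : ℝ) = (d : ℝ) - 2 := by
    have : d - 1 - 1 = d - 2 := by omega
    rw [this, Nat.cast_sub hd]; norm_num
  rw [this]; ring


lemma sumP (hM0 : M 0 = 1) (hModd : ∀ n, n % 2 = 1 → M n = 0) (i j p q : Fin d) :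
    (∑ r, ∏ a, M (expE i j p q r a))
      = (if i = j ∧ p = q then (if i = p then M 6 + ((d:ℝ)-1)*(M 4 * M 2)
            else M 4 * M 2 + M 4 * M 2 + ((d:ℝ)-2)*(M 2 * M 2 * M 2)) else 0)
        + (if i = p ∧ j = q ∧ ¬ i = j then
            M 4 * M 2 + M 4 * M 2 + ((d:ℝ)-2)*(M 2 * M 2 * M 2) else 0)
        + (if i = q ∧ j = p ∧ ¬ i = j then
            M 4 * M 2 + M 4 * M 2 + ((d:ℝ)-2)*(M 2 * M 2 * M 2) else 0) := by
  by_cases hij : i = j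
  · subst hij
    by_cases hpq : p = q
    · subst hpq
      by_cases hip : i = p
      · subst hip
        rw [sum_all M hM0 i]
        simp
      · have conv : ∀ r, (∏ a, M (expE i i p p r a)) = ∏ a, M ((if i = a then 2 else 0)
            + (if p = a then 2 else 0) + (if r = a then 2 else 0)) := fun r =>
          Finset.prod_congr rfl fun a _ => by congr 1; unfold expE; split_ifs <;> omega
        rw [Finset.sum_congr rfl fun r _ => conv r, sum_pair M hM0 i p hip]
        rw [if_pos ⟨rfl, rfl⟩, if_neg hip]
        norm_num
    · have hz : ∀ r, (∏ x, M (expE i i p q r x)) = 0 := by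
        intro r
        refine Pzero M hModd i i p q r p ?_
        have hqp : ¬ q = p := fun h => hpq h.symm
        simp only [hqp, if_false, if_true, eq_self_iff_true]
        split_ifs <;> omega
      rw [Finset.sum_eq_zero fun r _ => hz r]
      rw [if_neg (fun h => hpq h.2), if_neg (fun h => h.2.2 rfl), if_neg (fun h => h.2.2 rfl)]
      norm_num
  · by_cases hpq : p = q
    · subst hpq
      have hz : ∀ r, (∏ x, M (expE i j p p r x)) = 0 := by
        intro r
        refine Pzero M hModd i j p p r i ?_
        have hji : ¬ j = i := fun h => hij h.symm
        simp only [hji, if_false, if_true, eq_self_iff_true]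
        split_ifs <;> omega
      rw [Finset.sum_eq_zero fun r _ => hz r]
      simp [hij, show ¬(i = p ∧ j = p) from fun h => hij (h.1.trans h.2.symm)]
    · by_cases hip : i = p
      · subst hip
        by_cases hjq : j = q
        · subst hjq
          have conv : ∀ r, (∏ a, M (expE i j i j r a)) = ∏ a, M ((if i = a then 2 else 0)
              + (if j = a then 2 else 0) + (if r = a then 2 else 0)) := fun r =>
            Finset.prod_congr rfl fun a _ => by congr 1; unfold expE; split_ifs <;> omega
          rw [Finset.sum_congr rfl fun r _ => conv r, sum_pair M hM0 i j hij]
          rw [if_neg (fun h => hij h.1), if_pos ⟨rfl, rfl, hij⟩, if_neg (fun h => hij h.1)]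
          norm_num
        · have hz : ∀ r, (∏ x, M (expE i j i q r x)) = 0 := by
            intro r
            refine Pzero M hModd i j i q r j ?_
            have h1 : ¬ i = j := hij
            have h2 : ¬ q = j := fun h => hjq h.symm
            simp only [h1, h2, if_false, if_true, eq_self_iff_true]
            all_goals split_ifs <;> omega
          rw [Finset.sum_eq_zero fun r _ => hz r]
          simp [hij, hjq, show ¬(i = q ∧ j = i) from fun h => hij h.2.symm]
      · by_cases hiq : i = q
        · subst hiq
          by_cases hjp : j = p
          · subst hjp
            have conv : ∀ r, (∏ a, M (expE i j j i r a)) = ∏ a, M ((if i = a then 2 else 0)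
                + (if j = a then 2 else 0) + (if r = a then 2 else 0)) := fun r =>
              Finset.prod_congr rfl fun a _ => by congr 1; unfold expE; split_ifs <;> omega
            rw [Finset.sum_congr rfl fun r _ => conv r, sum_pair M hM0 i j hij]
            rw [if_neg (fun h => hij h.1), if_neg (fun h => hij h.1),
              if_pos ⟨rfl, rfl, hij⟩]
            norm_num
          · have hz : ∀ r, (∏ x, M (expE i j p i r x)) = 0 := by
              intro r
              refine Pzero M hModd i j p i r j ?_
              have h1 : ¬ i = j := hij
              have h2 : ¬ p = j := fun h => hjp h.symm
              simp only [h1, h2, if_false, if_true, eq_self_iff_true]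
              all_goals split_ifs <;> omega
            rw [Finset.sum_eq_zero fun r _ => hz r]
            simp [hij, hip, hjp]
        · have hz : ∀ r, (∏ x, M (expE i j p q r x)) = 0 := by
            intro r
            refine Pzero M hModd i j p q r i ?_
            have h1 : ¬ j = i := fun h => hij h.symm
            have h2 : ¬ p = i := fun h => hip h.symm
            have h3 : ¬ q = i := fun h => hiq h.symm
            simp only [h1, h2, h3, if_false, if_true, eq_self_iff_true]
          rw [Finset.sum_eq_zero fun r _ => hz r]
          simp [hij, hip, hiq]

end Sump

lemma alg {d : ℕ} (a b : Fin d → ℝ) (C1 C2 : ℝ) :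
    (∑ i, ∑ j, ∑ p, ∑ q, (a i * a j * b p * b q) *
      ((if i = j ∧ p = q then (if i = p then C1 else C2) else 0)
        + (if i = p ∧ j = q ∧ ¬ i = j then C2 else 0)
        + (if i = q ∧ j = p ∧ ¬ i = j then C2 else 0)))
    = C1 * (∑ i, (a i)^2 * (b i)^2)
      + C2 * ∑ i, ∑ j, (if i ≠ j then (a i)^2 * (b j)^2 + 2 * a i * b i * a j * b j else 0) := by
  have S1 : (∑ i, ∑ j, ∑ p, ∑ q, (a i * a j * b p * b q) *
        (if i = j ∧ p = q then (if i = p then C1 else C2) else 0))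
      = C1 * (∑ i, (a i)^2 * (b i)^2)
        + C2 * ∑ i, ∑ p, (if i = p then 0 else (a i)^2 * (b p)^2) := by
    have h1 : ∀ i j, (∑ p, ∑ q, (a i * a j * b p * b q) *
          (if i = j ∧ p = q then (if i = p then C1 else C2) else 0))
        = if i = j then ∑ p, a i * a i * b p * b p * (if i = p then C1 else C2) else 0 := by
      intro i j
      by_cases hij : i = j
      · subst hij
        simp only [true_and, if_true]
        refine Finset.sum_congr rfl fun p _ => ?_
        simp only [mul_ite, mul_zero]
        rw [Finset.sum_ite_eq]
        simp
      · simp [hij]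
    calc (∑ i, ∑ j, ∑ p, ∑ q, (a i * a j * b p * b q) *
          (if i = j ∧ p = q then (if i = p then C1 else C2) else 0))
        = ∑ i, ∑ j, (if i = j then ∑ p, a i * a i * b p * b p * (if i = p then C1 else C2) else 0) := by
          exact Finset.sum_congr rfl fun i _ => Finset.sum_congr rfl fun j _ => h1 i j
      _ = ∑ i, ∑ p, a i * a i * b p * b p * (if i = p then C1 else C2) := by
          refine Finset.sum_congr rfl fun i _ => ?_
          rw [Finset.sum_ite_eq]; simp
      _ = ∑ i, ∑ p, ((if i = p then a i * a i * b p * b p * C1 else 0)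
            + (if i = p then 0 else a i * a i * b p * b p * C2)) := by
          refine Finset.sum_congr rfl fun i _ => Finset.sum_congr rfl fun p _ => ?_
          split_ifs <;> ring
      _ = C1 * (∑ i, (a i)^2 * (b i)^2)
          + C2 * ∑ i, ∑ p, (if i = p then 0 else (a i)^2 * (b p)^2) := by
          simp only [Finset.sum_add_distrib]
          congr 1
          · rw [Finset.mul_sum]
            refine Finset.sum_congr rfl fun i _ => ?_
            rw [Finset.sum_ite_eq]
            simp only [Finset.mem_univ, if_true]
            ring
          · rw [Finset.mul_sum]
            refine Finset.sum_congr rfl fun i _ => ?_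
            rw [Finset.mul_sum]
            refine Finset.sum_congr rfl fun p _ => ?_
            split_ifs <;> ring
  have S2 : (∑ i, ∑ j, ∑ p, ∑ q, (a i * a j * b p * b q) *
        (if i = p ∧ j = q ∧ ¬ i = j then C2 else 0))
      = C2 * ∑ i, ∑ j, (if i = j then 0 else a i * b i * a j * b j) := by
    have h2 : ∀ i j p, (∑ q, (a i * a j * b p * b q) *
          (if i = p ∧ j = q ∧ ¬ i = j then C2 else 0))
        = if i = p then (if i = j then 0 else a i * a j * b p * b j * C2) else 0 := by
      intro i j p
      by_cases hip : i = p
      · subst hip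
        by_cases hij : i = j
        · simp [hij]
        · simp [hij, mul_ite, mul_zero, Finset.sum_ite_eq]
      · simp [hip]
    calc (∑ i, ∑ j, ∑ p, ∑ q, (a i * a j * b p * b q) *
          (if i = p ∧ j = q ∧ ¬ i = j then C2 else 0))
        = ∑ i, ∑ j, ∑ p, (if i = p then (if i = j then 0 else a i * a j * b p * b j * C2) else 0) := by
          exact Finset.sum_congr rfl fun i _ => Finset.sum_congr rfl fun j _ =>
            Finset.sum_congr rfl fun p _ => h2 i j p
      _ = ∑ i, ∑ j, (if i = j then 0 else a i * a j * b i * b j * C2) := by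
          refine Finset.sum_congr rfl fun i _ => Finset.sum_congr rfl fun j _ => ?_
          rw [Finset.sum_ite_eq]; simp
      _ = C2 * ∑ i, ∑ j, (if i = j then 0 else a i * b i * a j * b j) := by
          rw [Finset.mul_sum]
          refine Finset.sum_congr rfl fun i _ => ?_
          rw [Finset.mul_sum]
          refine Finset.sum_congr rfl fun j _ => ?_
          split_ifs <;> ring
  have S3 : (∑ i, ∑ j, ∑ p, ∑ q, (a i * a j * b p * b q) *
        (if i = q ∧ j = p ∧ ¬ i = j then C2 else 0))
      = C2 * ∑ i, ∑ j, (if i = j then 0 else a i * b i * a j * b j) := by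
    have h3 : ∀ i j p, (∑ q, (a i * a j * b p * b q) *
          (if i = q ∧ j = p ∧ ¬ i = j then C2 else 0))
        = if j = p then (if i = j then 0 else a i * a j * b p * b i * C2) else 0 := by
      intro i j p
      by_cases hjp : j = p
      · subst hjp
        by_cases hij : i = j
        · simp [hij]
        · simp [hij, mul_ite, mul_zero, Finset.sum_ite_eq]
      · simp [hjp]
    calc (∑ i, ∑ j, ∑ p, ∑ q, (a i * a j * b p * b q) *
          (if i = q ∧ j = p ∧ ¬ i = j then C2 else 0))
        = ∑ i, ∑ j, ∑ p, (if j = p then (if i = j then 0 else a i * a j * b p * b i * C2) else 0) := by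
          exact Finset.sum_congr rfl fun i _ => Finset.sum_congr rfl fun j _ =>
            Finset.sum_congr rfl fun p _ => h3 i j p
      _ = ∑ i, ∑ j, (if i = j then 0 else a i * a j * b j * b i * C2) := by
          refine Finset.sum_congr rfl fun i _ => Finset.sum_congr rfl fun j _ => ?_
          rw [Finset.sum_ite_eq]; simp
      _ = C2 * ∑ i, ∑ j, (if i = j then 0 else a i * b i * a j * b j) := by
          rw [Finset.mul_sum]
          refine Finset.sum_congr rfl fun i _ => ?_
          rw [Finset.mul_sum]
          refine Finset.sum_congr rfl fun j _ => ?_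
          split_ifs <;> ring
  have hsplit : (∑ i, ∑ j, (if i ≠ j then (a i)^2 * (b j)^2 + 2 * a i * b i * a j * b j else 0))
      = (∑ i, ∑ j, (if i = j then 0 else (a i)^2 * (b j)^2))
        + 2 * (∑ i, ∑ j, (if i = j then 0 else a i * b i * a j * b j)) := by
    have hptw : ∀ i j : Fin d, (if i ≠ j then (a i)^2 * (b j)^2 + 2 * a i * b i * a j * b j else 0)
        = (if i = j then 0 else (a i)^2 * (b j)^2)
          + 2 * (if i = j then 0 else a i * b i * a j * b j) := by
      intro i j
      by_cases h : i = j <;> simp [h] <;> ring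
    calc (∑ i, ∑ j, (if i ≠ j then (a i)^2 * (b j)^2 + 2 * a i * b i * a j * b j else 0))
        = ∑ i, ∑ j, ((if i = j then 0 else (a i)^2 * (b j)^2)
            + 2 * (if i = j then 0 else a i * b i * a j * b j)) := by
          exact Finset.sum_congr rfl fun i _ => Finset.sum_congr rfl fun j _ => hptw i j
      _ = (∑ i, ∑ j, (if i = j then 0 else (a i)^2 * (b j)^2))
          + 2 * (∑ i, ∑ j, (if i = j then 0 else a i * b i * a j * b j)) := by
          simp only [Finset.sum_add_distrib, Finset.mul_sum]
  calc (∑ i, ∑ j, ∑ p, ∑ q, (a i * a j * b p * b q) *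
      ((if i = j ∧ p = q then (if i = p then C1 else C2) else 0)
        + (if i = p ∧ j = q ∧ ¬ i = j then C2 else 0)
        + (if i = q ∧ j = p ∧ ¬ i = j then C2 else 0)))
      = (∑ i, ∑ j, ∑ p, ∑ q, (a i * a j * b p * b q) *
          (if i = j ∧ p = q then (if i = p then C1 else C2) else 0))
        + ((∑ i, ∑ j, ∑ p, ∑ q, (a i * a j * b p * b q) *
          (if i = p ∧ j = q ∧ ¬ i = j then C2 else 0))
        + (∑ i, ∑ j, ∑ p, ∑ q, (a i * a j * b p * b q) *
          (if i = q ∧ j = p ∧ ¬ i = j then C2 else 0))) := by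
        simp only [mul_add, Finset.sum_add_distrib]
        ring
    _ = C1 * (∑ i, (a i)^2 * (b i)^2)
      + C2 * ∑ i, ∑ j, (if i ≠ j then (a i)^2 * (b j)^2 + 2 * a i * b i * a j * b j else 0) := by
        rw [S1, S2, S3, hsplit]
        ring

/-- For a random vector `z` with i.i.d. components having zero first, third
and fifth moments, second moment `σ²` and finite sixth moment (standardized moments `κ₄, κ₆`),
for every matrix `A ∈ ℝ^{m×d}`:
`E[‖Az‖⁴‖z‖²] = σ⁶ Σ_{k,l} [(κ₆+(d−1)κ₄) Σᵢ A_{k,i}²A_{l,i}²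
  + (d−2+2κ₄) Σ_{i≠j} (A_{k,i}²A_{l,j}² + 2A_{k,i}A_{l,i}A_{k,j}A_{l,j})]`. -/
theorem stmt_11 {m d : ℕ}
    {Ω : Type*} [MeasurableSpace Ω] (μ : Measure Ω) [IsProbabilityMeasure μ]
    (z : Ω → Fin d → ℝ)
    (hmeas : ∀ i, Measurable fun ω => z ω i)
    (hindep : iIndepFun
      (fun i ω => z ω i) μ)
    (hident : ∀ i j : Fin d, IdentDistrib (fun ω => z ω i) (fun ω => z ω j) μ μ)
    (σ κ₄ κ₆ : ℝ) (hσ : 0 < σ)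
    (hm1 : ∀ i, ∫ ω, z ω i ∂μ = 0)
    (hm2 : ∀ i, ∫ ω, z ω i ^ 2 ∂μ = σ ^ 2)
    (hm3 : ∀ i, ∫ ω, z ω i ^ 3 ∂μ = 0)
    (hm4 : ∀ i, ∫ ω, z ω i ^ 4 ∂μ = κ₄ * σ ^ 4)
    (hm5 : ∀ i, ∫ ω, z ω i ^ 5 ∂μ = 0)
    (hm6int : ∀ i, Integrable (fun ω => z ω i ^ 6) μ)
    (hm6 : ∀ i, ∫ ω, z ω i ^ 6 ∂μ = κ₆ * σ ^ 6)
    (A : Matrix (Fin m) (Fin d) ℝ) :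
    ∫ ω, ((A *ᵥ z ω) ⬝ᵥ (A *ᵥ z ω)) ^ 2 * (z ω ⬝ᵥ z ω) ∂μ
      = σ ^ 6 * ∑ k, ∑ l,
          ((κ₆ + ((d : ℝ) - 1) * κ₄) * ∑ i, (A k i) ^ 2 * (A l i) ^ 2
            + ((d : ℝ) - 2 + 2 * κ₄) *
              ∑ i, ∑ j, if i ≠ j then
                (A k i) ^ 2 * (A l j) ^ 2 + 2 * A k i * A l i * A k j * A l j else 0) := by
  classical
  set M : ℕ → ℝ := Mom σ κ₄ κ₆ with hMdef
  -- moments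
  have hMom : ∀ (i : Fin d) (n : ℕ), n ≤ 6 → ∫ ω, z ω i ^ n ∂μ = M n := by
    intro i n hn
    interval_cases n <;>
      simp [hMdef, Mom, hm1 i, hm2 i, hm3 i, hm4 i, hm5 i, hm6 i]
  have hPowInt : ∀ (i : Fin d) (n : ℕ), n ≤ 6 → Integrable (fun ω => z ω i ^ n) μ :=
    fun i n hn => aux_pow_int (hmeas i) (hm6int i) hn
  -- generic product moments
  have hProd : ∀ e : Fin d → ℕ, (∀ a, e a ≤ 6) →
      Integrable (fun ω => ∏ a, z ω a ^ e a) μ ∧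
        ∫ ω, ∏ a, z ω a ^ e a ∂μ = ∏ a, M (e a) := by
    intro e he
    have hind2 : iIndepFun
        (fun a ω => z ω a ^ e a) μ := by
      have := hindep.comp (fun a (x : ℝ) => x ^ e a)
        (fun a => measurable_id.pow_const (e a))
      exact this
    have h := aux_prod hind2 (fun a => (hmeas a).pow_const _)
      (fun a => hPowInt a _ (he a)) Finset.univ
    exact ⟨h.1, h.2.trans (Finset.prod_congr rfl fun a _ => hMom a _ (he a))⟩
  -- monomials
  set P : Fin d → Fin d → Fin d → Fin d → Fin d → ℝ :=
    fun i j p q r => ∏ a, M (expE i j p q r a) with hPdef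
  have hmono_eq : ∀ (v : Fin d → ℝ) i j p q r,
      v i * v j * v p * v q * v r ^ 2 = ∏ a, v a ^ expE i j p q r a := by
    intro v i j p q r
    simp only [expE, pow_add, Finset.prod_mul_distrib, pow_ite, pow_zero, pow_one,
      Finset.prod_ite_eq, Finset.mem_univ, if_true]
  have hmonoInt : ∀ i j p q r : Fin d,
      Integrable (fun ω => z ω i * z ω j * z ω p * z ω q * z ω r ^ 2) μ := by
    intro i j p q r
    have := (hProd (expE i j p q r) (expE_le i j p q r)).1
    refine this.congr ?_
    filter_upwards with ω
    exact (hmono_eq (z ω) i j p q r).symm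
  have hmonoP : ∀ i j p q r : Fin d,
      ∫ ω, z ω i * z ω j * z ω p * z ω q * z ω r ^ 2 ∂μ = P i j p q r := by
    intro i j p q r
    rw [show P i j p q r = ∏ a, M (expE i j p q r a) from rfl,
      ← (hProd (expE i j p q r) (expE_le i j p q r)).2]
    congr 1; funext ω; exact hmono_eq (z ω) i j p q r
  have expand : ∀ v : Fin d → ℝ, ((A *ᵥ v) ⬝ᵥ (A *ᵥ v))^2 * (v ⬝ᵥ v)
      = ∑ r : Fin d, ∑ l : Fin m, ∑ p : Fin d, ∑ q : Fin d, ∑ k : Fin m, ∑ j : Fin d, ∑ i : Fin d,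
          (A k i * A k j * A l p * A l q) * (v i * v j * v p * v q * v r ^ 2) := by
    intro v
    simp only [dotProduct, mulVec, sq, Finset.sum_mul, Finset.mul_sum]
    refine Finset.sum_congr rfl fun r _ => Finset.sum_congr rfl fun l _ =>
      Finset.sum_congr rfl fun p _ => Finset.sum_congr rfl fun q _ =>
      Finset.sum_congr rfl fun k _ => Finset.sum_congr rfl fun j _ =>
      Finset.sum_congr rfl fun i _ => by ring
  -- integral over product-type sum
  have main1 : ∫ ω, ((A *ᵥ z ω) ⬝ᵥ (A *ᵥ z ω)) ^ 2 * (z ω ⬝ᵥ z ω) ∂μ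
      = ∑ t : Fin d × Fin m × Fin d × Fin d × Fin m × Fin d × Fin d,
          (A t.2.2.2.2.1 t.2.2.2.2.2.2 * A t.2.2.2.2.1 t.2.2.2.2.2.1
            * A t.2.1 t.2.2.1 * A t.2.1 t.2.2.2.1)
            * P t.2.2.2.2.2.2 t.2.2.2.2.2.1 t.2.2.1 t.2.2.2.1 t.1 := by
    have hptw : (fun ω => ((A *ᵥ z ω) ⬝ᵥ (A *ᵥ z ω)) ^ 2 * (z ω ⬝ᵥ z ω))
        = fun ω => ∑ t : Fin d × Fin m × Fin d × Fin d × Fin m × Fin d × Fin d,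
            (A t.2.2.2.2.1 t.2.2.2.2.2.2 * A t.2.2.2.2.1 t.2.2.2.2.2.1
              * A t.2.1 t.2.2.1 * A t.2.1 t.2.2.2.1)
              * (z ω t.2.2.2.2.2.2 * z ω t.2.2.2.2.2.1 * z ω t.2.2.1 * z ω t.2.2.2.1
                  * z ω t.1 ^ 2) := by
      funext ω
      rw [expand (z ω)]
      simp only [Fintype.sum_prod_type]
    rw [hptw, integral_finset_sum]
    · refine Finset.sum_congr rfl fun t _ => ?_
      rw [integral_const_mul, hmonoP]
    · intro t _
      exact (hmonoInt _ _ _ _ _).const_mul _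
  have main2 : (∑ t : Fin d × Fin m × Fin d × Fin d × Fin m × Fin d × Fin d,
        (A t.2.2.2.2.1 t.2.2.2.2.2.2 * A t.2.2.2.2.1 t.2.2.2.2.2.1
          * A t.2.1 t.2.2.1 * A t.2.1 t.2.2.2.1)
          * P t.2.2.2.2.2.2 t.2.2.2.2.2.1 t.2.2.1 t.2.2.2.1 t.1)
      = ∑ k : Fin m, ∑ l : Fin m, ∑ i : Fin d, ∑ j : Fin d, ∑ p : Fin d, ∑ q : Fin d, ∑ r : Fin d,
          (A k i * A k j * A l p * A l q) * P i j p q r := by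
    have h2 : (∑ s : Fin m × Fin m × Fin d × Fin d × Fin d × Fin d × Fin d,
        (A s.1 s.2.2.1 * A s.1 s.2.2.2.1 * A s.2.1 s.2.2.2.2.1 * A s.2.1 s.2.2.2.2.2.1)
          * P s.2.2.1 s.2.2.2.1 s.2.2.2.2.1 s.2.2.2.2.2.1 s.2.2.2.2.2.2)
        = ∑ k : Fin m, ∑ l : Fin m, ∑ i : Fin d, ∑ j : Fin d, ∑ p : Fin d, ∑ q : Fin d, ∑ r : Fin d,
            (A k i * A k j * A l p * A l q) * P i j p q r := by
      simp only [Fintype.sum_prod_type]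
    rw [← h2]
    exact Fintype.sum_equiv
      ⟨fun t => (t.2.2.2.2.1, t.2.1, t.2.2.2.2.2.2, t.2.2.2.2.2.1, t.2.2.1, t.2.2.2.1, t.1),
        fun s => (s.2.2.2.2.2.2, s.2.1, s.2.2.2.2.1, s.2.2.2.2.2.1, s.1, s.2.2.2.1, s.2.2.1),
        fun t => rfl, fun s => rfl⟩ _ _ (fun t => rfl)
  rw [main1, main2, Finset.mul_sum]
  refine Finset.sum_congr rfl fun k _ => ?_
  rw [Finset.mul_sum]
  refine Finset.sum_congr rfl fun l _ => ?_
  have hM0 : M 0 = 1 := by norm_num [hMdef, Mom]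
  have hM2 : M 2 = σ^2 := by norm_num [hMdef, Mom]
  have hM4 : M 4 = κ₄ * σ^4 := by norm_num [hMdef, Mom]
  have hM6 : M 6 = κ₆ * σ^6 := by norm_num [hMdef, Mom]
  have hModdd : ∀ n, n % 2 = 1 → M n = 0 := fun n h => Mom_odd σ κ₄ κ₆ h
  have hQ : ∀ i j p q : Fin d, (∑ r, P i j p q r)
      = (if i = j ∧ p = q then (if i = p then M 6 + ((d:ℝ)-1)*(M 4 * M 2)
            else M 4 * M 2 + M 4 * M 2 + ((d:ℝ)-2)*(M 2 * M 2 * M 2)) else 0)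
        + (if i = p ∧ j = q ∧ ¬ i = j then
            M 4 * M 2 + M 4 * M 2 + ((d:ℝ)-2)*(M 2 * M 2 * M 2) else 0)
        + (if i = q ∧ j = p ∧ ¬ i = j then
            M 4 * M 2 + M 4 * M 2 + ((d:ℝ)-2)*(M 2 * M 2 * M 2) else 0) :=
    fun i j p q => sumP M hM0 hModdd i j p q
  calc ∑ i, ∑ j, ∑ p, ∑ q, ∑ r, (A k i * A k j * A l p * A l q) * P i j p q r
      = ∑ i, ∑ j, ∑ p, ∑ q, (A k i * A k j * A l p * A l q) *
          ((if i = j ∧ p = q then (if i = p then M 6 + ((d:ℝ)-1)*(M 4 * M 2)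
              else M 4 * M 2 + M 4 * M 2 + ((d:ℝ)-2)*(M 2 * M 2 * M 2)) else 0)
            + (if i = p ∧ j = q ∧ ¬ i = j then
                M 4 * M 2 + M 4 * M 2 + ((d:ℝ)-2)*(M 2 * M 2 * M 2) else 0)
            + (if i = q ∧ j = p ∧ ¬ i = j then
                M 4 * M 2 + M 4 * M 2 + ((d:ℝ)-2)*(M 2 * M 2 * M 2) else 0)) := by
        refine Finset.sum_congr rfl fun i _ => Finset.sum_congr rfl fun j _ =>
          Finset.sum_congr rfl fun p _ => Finset.sum_congr rfl fun q _ => ?_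
        rw [← Finset.mul_sum, hQ i j p q]
    _ = (M 6 + ((d:ℝ)-1)*(M 4 * M 2)) * (∑ i, (A k i)^2 * (A l i)^2)
        + (M 4 * M 2 + M 4 * M 2 + ((d:ℝ)-2)*(M 2 * M 2 * M 2)) *
          ∑ i, ∑ j, (if i ≠ j then
            (A k i)^2 * (A l j)^2 + 2 * A k i * A l i * A k j * A l j else 0) :=
        alg (A k) (A l) _ _
    _ = σ ^ 6 * ((κ₆ + ((d : ℝ) - 1) * κ₄) * ∑ i, (A k i) ^ 2 * (A l i) ^ 2
          + ((d : ℝ) - 2 + 2 * κ₄) *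
            ∑ i, ∑ j, if i ≠ j then
              (A k i) ^ 2 * (A l j) ^ 2 + 2 * A k i * A l i * A k j * A l j else 0) := by
        rw [hM2, hM4, hM6]; ring
end
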